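/- arXiv:quant-ph/0701064 — 7 statements merged into one kernel-verified Lean document; each statement's English description precedes it below -/
import Mathlib

section
/- Let n ≥ 1 and let V and W be irreducible (simple) finite-dimensional complex representations of G = Equiv.Perm (Fin n) with characters χ_V and χ_W. Define P(q) = ∑_{π ∈ G} q^{c(π)} · χ_V(π) · χ_W(π) for q : ℕ, where c(π) is the number of orbits of π acting on Fin n. Then there exists a natural number q₊ with 1 ≤ q₊ ≤ n such that: for every q ≥ q₊, P(q) is a positive real number (its imaginary part is zero and its real part is strictly positive), and for every q with 0 ≤ q < q₊, P(q) = 0. Moreover, if V and W are not isomorphic, then q₊ ≥ 2. -/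
/-!
A colouring `F : Fin n → Fin q` is fixed by `π` iff it is constant on the cycles of `π`, so
`q ^ c(π)` counts the colourings fixed by `π`. Swapping the two sums,
`P(q) = ∑_F ∑_{π ∈ Stab F} χ_{V ⊗ W}(π) = ∑_F |Stab F| · dim (V ⊗ W)^{Stab F}`,
a natural number. Composing with `Fin q ↪ Fin q'` preserves stabilizers, so this count is
monotone in `q`. It vanishes at `q = 0`, is positive at `q = n` (an injective colouring has
trivial stabilizer), and at `q = 1` it is `|Sₙ| ⟨χ_V, χ_W⟩` because every permutation is
conjugate to its inverse; hence it vanishes at `q = 1` when `V ≇ W`. The threshold `q₊` is the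
least `q` at which the count is nonzero.
-/

open CategoryTheory

/-- The number of cycles of a permutation `π` of `Fin n`, counting fixed points as
cycles of length 1: the number of orbits of the action of `π` on `Fin n`. -/
noncomputable def cycleCount {n : ℕ} (π : Equiv.Perm (Fin n)) : ℕ :=
  Nat.card (MulAction.orbitRel.Quotient (Subgroup.zpowers π) (Fin n))

open MulAction Module

namespace FDRep

variable {G : Type*} [Group G] (X : FDRep ℂ G)

noncomputable def invariantsWeight (H : Subgroup G) : ℕ :=
  Nat.card H * finrank ℂ (Representation.invariants (X.ρ.comp H.subtype))

theorem sum_character_subgroup (H : Subgroup G) [Fintype H] :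
    ∑ h : H, X.character h = X.invariantsWeight H := by
  have : Invertible (Nat.card H : ℂ) := invertibleOfNonzero (NeZero.ne _)
  have h := average_char_eq_finrank_invariants (FDRep.of (X.ρ.comp H.subtype))
  rw [inv_mul_eq_iff_eq_mul₀ (NeZero.ne _)] at h
  rw [invariantsWeight, Nat.cast_mul]
  exact h

theorem invariantsWeight_bot : X.invariantsWeight ⊥ = finrank ℂ X := by
  have h := X.sum_character_subgroup ⊥
  rw [Fintype.sum_unique, show ((default : (⊥ : Subgroup G)) : G) = 1 from rfl, char_one] at h
  exact_mod_cast h.symm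

theorem sum_card_fixedBy_mul_character [Fintype G] {β : Type*} [MulAction G β] [Fintype β] :
    ∑ g : G, (Nat.card (fixedBy β g) : ℂ) * X.character g =
      ∑ b : β, (X.invariantsWeight (stabilizer G b) : ℂ) := by
  classical
  calc ∑ g : G, (Nat.card (fixedBy β g) : ℂ) * X.character g
      = ∑ g : G, ∑ b : β, if g • b = b then X.character g else 0 := by
        refine Finset.sum_congr rfl fun g _ => ?_
        rw [Finset.sum_ite, Finset.sum_const_zero, add_zero, Finset.sum_const, nsmul_eq_mul,
          ← Fintype.card_subtype, ← Nat.card_eq_fintype_card]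
        rfl
    _ = ∑ b : β, ∑ g : G, if g • b = b then X.character g else 0 := Finset.sum_comm
    _ = ∑ b : β, (X.invariantsWeight (stabilizer G b) : ℂ) := by
        refine Finset.sum_congr rfl fun b _ => ?_
        rw [← sum_character_subgroup, ← Finset.sum_filter]
        exact Finset.sum_subtype _ (fun g => by simp [mem_stabilizer_iff]) _

end FDRep

section Colouring

attribute [local instance] arrowAction

variable {G α C : Type*} [Group G] [MulAction G α]

theorem mem_fixedBy_arrow {g : G} {F : α → C} :
    F ∈ fixedBy (α → C) g ↔ ∀ a, F (g • a) = F a := by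
  refine mem_fixedBy.trans ⟨fun h a => ?_, fun h => funext fun a => ?_⟩
  · have : F (g⁻¹ • g • a) = F (g • a) := congrFun h (g • a)
    rwa [inv_smul_smul, eq_comm] at this
  · show F (g⁻¹ • a) = F a
    rw [← h, smul_inv_smul]

def fixedByArrowEquiv (g : G) :
    fixedBy (α → C) g ≃ (orbitRel.Quotient (Subgroup.zpowers g) α → C) where
  toFun F := Quotient.lift F.1 <| by
    rintro _ b ⟨⟨_, k, rfl⟩, rfl⟩
    exact mem_fixedBy_arrow.mp (fixedBy_subset_fixedBy_zpow _ g k F.2) b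
  invFun F := ⟨F ∘ Quotient.mk'', mem_fixedBy_arrow.mpr fun a =>
    congrArg F (Quotient.sound' ⟨⟨g, Subgroup.mem_zpowers g⟩, rfl⟩)⟩
  left_inv _ := rfl
  right_inv F := funext fun x => Quotient.inductionOn' x fun _ => rfl

theorem card_fixedBy_arrow [Finite α] (g : G) :
    Nat.card (fixedBy (α → C) g) =
      Nat.card C ^ Nat.card (orbitRel.Quotient (Subgroup.zpowers g) α) := by
  rw [Nat.card_congr (fixedByArrowEquiv g), Nat.card_fun]

theorem stabilizer_comp_of_injective {D : Type*} {φ : C → D} (hφ : Function.Injective φ)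
    (F : α → C) :
    stabilizer G (φ ∘ F) = stabilizer G F := by
  ext g
  simp only [mem_stabilizer_iff]
  exact hφ.comp_left.eq_iff (a := g • F)

theorem stabilizer_eq_bot_of_injective [FaithfulSMul G α] {F : α → C}
    (hF : Function.Injective F) : stabilizer G F = ⊥ := by
  refine (Subgroup.eq_bot_iff_forall _).mpr fun g hg => ?_
  refine inv_eq_one.mp (eq_of_smul_eq_smul fun a => hF ?_)
  rw [one_smul]
  exact congrFun (mem_stabilizer_iff.mp hg) a

variable [Fintype α] [DecidableEq α] (X : FDRep ℂ G)

variable (α) in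
noncomputable def colouringWeight (q : ℕ) : ℕ :=
  ∑ F : α → Fin q, X.invariantsWeight (stabilizer G F)

theorem sum_pow_card_orbits_mul_character [Fintype G] (q : ℕ) :
    ∑ g : G, (q : ℂ) ^ Nat.card (orbitRel.Quotient (Subgroup.zpowers g) α) * X.character g =
      colouringWeight α X q := by
  rw [colouringWeight, Nat.cast_sum, ← X.sum_card_fixedBy_mul_character]
  refine Finset.sum_congr rfl fun g _ => ?_
  rw [card_fixedBy_arrow, Nat.card_eq_fintype_card (α := Fin q), Fintype.card_fin, Nat.cast_pow]

theorem colouringWeight_mono : Monotone (colouringWeight α X) := by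
  intro q q' hq
  let castLE : (α → Fin q) ↪ (α → Fin q') :=
    ⟨(Fin.castLE hq ∘ ·), (Fin.castLE_injective hq).comp_left⟩
  calc colouringWeight α X q
      = ∑ F ∈ Finset.univ.map castLE, X.invariantsWeight (stabilizer G F) := by
        simp only [Finset.sum_map, colouringWeight, castLE, Function.Embedding.coeFn_mk,
          stabilizer_comp_of_injective (Fin.castLE_injective hq)]
    _ ≤ colouringWeight α X q' := Finset.sum_le_sum_of_subset (Finset.subset_univ _)

theorem colouringWeight_zero [Nonempty α] : colouringWeight α X 0 = 0 := by
  simp [colouringWeight]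

theorem colouringWeight_card_pos [FaithfulSMul G α] (hX : finrank ℂ X ≠ 0) :
    0 < colouringWeight α X (Fintype.card α) := by
  calc 0 < finrank ℂ X := Nat.pos_of_ne_zero hX
    _ = X.invariantsWeight (stabilizer G ⇑(Fintype.equivFin α)) := by
        rw [stabilizer_eq_bot_of_injective (Fintype.equivFin α).injective,
          FDRep.invariantsWeight_bot]
    _ ≤ colouringWeight α X (Fintype.card α) :=
        Finset.single_le_sum (f := fun F : α → Fin _ => X.invariantsWeight (stabilizer G F))
          (fun _ _ => Nat.zero_le _) (Finset.mem_univ _)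

end Colouring

namespace FDRep

variable {G : Type} [Group G] [Fintype G]

theorem finrank_ne_zero_of_simple (X : FDRep ℂ G) [Simple X] : finrank ℂ X ≠ 0 := by
  intro h
  have : Subsingleton X := finrank_zero_iff.mp h
  have hχ : ∀ g, X.character g = 0 := fun g => by
    rw [character, Subsingleton.elim (X.ρ g) 0, map_zero]
  have := (simple_iff_char_is_norm_one X).mp ‹_›
  simp only [hχ, zero_mul, Finset.sum_const_zero] at this
  exact (NeZero.ne (Nat.card G : ℂ)) this.symm

theorem char_perm_inv {α : Type*} [Fintype α] [DecidableEq α] (X : FDRep ℂ (Equiv.Perm α))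
    (π : Equiv.Perm α) : X.character π⁻¹ = X.character π := by
  obtain ⟨σ, hσ⟩ := isConj_iff.mp <|
    Equiv.Perm.isConj_iff_cycleType_eq.mpr (Equiv.Perm.cycleType_inv π).symm
  rw [← hσ, char_conj]

end FDRep

open MonoidalCategory in
theorem colouringWeight_one_eq_zero {α : Type} [Fintype α] [DecidableEq α]
    (V W : FDRep ℂ (Equiv.Perm α)) [Simple V] [Simple W] (hVW : IsEmpty (V ≅ W)) :
    colouringWeight α (V ⊗ W) 1 = 0 := by
  have horth := FDRep.char_orthonormal V W
  rw [if_neg (not_nonempty_iff.mpr hVW), mul_eq_zero] at horth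
  have hsum := sum_pow_card_orbits_mul_character (α := α) (V ⊗ W) 1
  simp only [Nat.cast_one, one_pow, one_mul, FDRep.char_tensor, Pi.mul_apply] at hsum
  simp only [FDRep.char_perm_inv] at horth
  exact_mod_cast hsum.symm.trans (horth.resolve_left (inv_ne_zero (NeZero.ne _)))

open MonoidalCategory in
/-- The character polynomial `P(q) = ∑_π q^{c(π)} χ_V(π) χ_W(π)` of two irreducible
representations `V`, `W` of `S_n` (`n ≥ 1`) has a threshold `q₊` with `1 ≤ q₊ ≤ n`:
`P(q)` is a strictly positive real for all `q ≥ q₊` and vanishes for `0 ≤ q < q₊`;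
moreover `q₊ ≥ 2` when `V` and `W` are not isomorphic. -/
theorem character_polynomial_threshold (n : ℕ) (hn : 1 ≤ n)
    (V W : FDRep ℂ (Equiv.Perm (Fin n))) (hV : Simple V) (hW : Simple W) :
    ∃ qp : ℕ, 1 ≤ qp ∧ qp ≤ n ∧
      (∀ q : ℕ, qp ≤ q →
        (∑ π : Equiv.Perm (Fin n),
            (q : ℂ) ^ cycleCount π * V.character π * W.character π).im = 0 ∧
        0 < (∑ π : Equiv.Perm (Fin n),
            (q : ℂ) ^ cycleCount π * V.character π * W.character π).re) ∧
      (∀ q : ℕ, q < qp →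
        ∑ π : Equiv.Perm (Fin n),
            (q : ℂ) ^ cycleCount π * V.character π * W.character π = 0) ∧
      (IsEmpty (V ≅ W) → 2 ≤ qp) := by
  set N := colouringWeight (Fin n) (V ⊗ W)
  have hP : ∀ q : ℕ, ∑ π : Equiv.Perm (Fin n),
      (q : ℂ) ^ cycleCount π * V.character π * W.character π = N q := fun q => by
    simp only [mul_assoc, ← Pi.mul_apply V.character, ← FDRep.char_tensor]
    exact sum_pow_card_orbits_mul_character _ q
  have : Nonempty (Fin n) := ⟨⟨0, hn⟩⟩
  have hN0 : N 0 = 0 := colouringWeight_zero _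
  have hNn : 0 < N n := by
    simpa using colouringWeight_card_pos (α := Fin n) (V ⊗ W) <| by
      rw [show finrank ℂ (V ⊗ W : FDRep ℂ _) = finrank ℂ V * finrank ℂ W from
        finrank_tensorProduct]
      exact mul_ne_zero (FDRep.finrank_ne_zero_of_simple V)
        (FDRep.finrank_ne_zero_of_simple W)
  have hex : ∃ q, N q ≠ 0 := ⟨n, hNn.ne'⟩
  refine ⟨Nat.find hex, ?_, Nat.find_le hNn.ne', fun q hq => ?_, fun q hq => ?_, fun hVW => ?_⟩
  · refine (Nat.le_find_iff hex 1).mpr fun m hm => ?_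
    rw [Nat.lt_one_iff.mp hm, not_not]
    exact hN0
  · have hpos : 0 < N q :=
      (Nat.pos_of_ne_zero (Nat.find_spec hex)).trans_le (colouringWeight_mono _ hq)
    rw [hP, Complex.natCast_im, Complex.natCast_re]
    exact ⟨rfl, Nat.cast_pos.mpr hpos⟩
  · rw [hP, not_not.mp (Nat.find_min hex hq), Nat.cast_zero]
  · refine (Nat.le_find_iff hex 2).mpr fun m hm => not_not.mpr ?_
    interval_cases m
    · exact hN0
    · exact colouringWeight_one_eq_zero V W hVW
end

section
/- Let n ≥ 1 and let V and W be irreducible (simple) finite-dimensional complex representations of G = Equiv.Perm (Fin n) with characters χ_V and χ_W. Define P(q) = ∑_{π ∈ G} q^{c(π)} · χ_V(π) · χ_W(π) for q : ℤ, where c(π) is the number of orbits of π acting on Fin n. Then there exist integers q₊ ≥ 1 and q₋ ≤ −1 such that P(q) ≠ 0 for all integers q with q ≥ q₊ or q ≤ q₋, and P(q) = 0 for all integers q with q₋ < q < q₊. -/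
open CategoryTheory

set_option synthInstance.maxHeartbeats 1000000
set_option maxHeartbeats 1000000

namespace CharPolyAux

open Equiv MulAction MonoidalCategory

variable {n : ℕ}

lemma orbitRel_iff (π : Equiv.Perm (Fin n)) (x y : Fin n) :
    (MulAction.orbitRel (Subgroup.zpowers π) (Fin n)) x y ↔ π.SameCycle y x := by
  rw [MulAction.orbitRel_apply, MulAction.mem_orbit_iff]
  constructor
  · rintro ⟨⟨g, hg⟩, h⟩
    obtain ⟨k, rfl⟩ := Subgroup.mem_zpowers_iff.mp hg
    exact ⟨k, h⟩
  · rintro ⟨k, h⟩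
    exact ⟨⟨π ^ k, Subgroup.zpow_mem_zpowers π k⟩, h⟩

lemma apply_zpow_eq {α : Type*} (π : Equiv.Perm (Fin n)) {f : Fin n → α}
    (hf : ∀ x, f (π x) = f x) : ∀ (k : ℤ) (x : Fin n), f ((π ^ k) x) = f x := by
  intro k
  induction k using Int.induction_on with
  | zero => simp
  | succ k ih =>
      intro x
      have : (π ^ ((k : ℤ) + 1)) x = (π ^ (k : ℤ)) (π x) := by
        rw [zpow_add_one]; rfl
      rw [this, ih, hf]
  | pred k ih =>
      intro x
      have h1 : (π ^ ((-k : ℤ) - 1)) x = (π ^ (-k : ℤ)) (π⁻¹ x) := by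
        rw [zpow_sub_one]; rfl
      have h2 : f (π⁻¹ x) = f x := by
        conv_rhs => rw [show x = π (π⁻¹ x) by simp]
        rw [hf]
      rw [h1, ih, h2]

/-- Functions fixed by precomposition with `π` correspond to functions on the orbit quotient. -/
noncomputable def fixedFunEquiv (π : Equiv.Perm (Fin n)) (α : Type*) :
    {f : Fin n → α // ∀ x, f (π x) = f x} ≃
      (MulAction.orbitRel.Quotient (Subgroup.zpowers π) (Fin n) → α) where
  toFun f := Quotient.lift f.1 (by
    rintro a b hab
    obtain ⟨k, hk⟩ := (orbitRel_iff π a b).mp hab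
    rw [← hk, apply_zpow_eq π f.2])
  invFun g := ⟨fun x => g (Quotient.mk _ x), by
    intro x
    refine congrArg g (Quotient.sound ?_)
    exact (orbitRel_iff π (π x) x).mpr ⟨1, by simp⟩⟩
  left_inv f := Subtype.ext (funext fun x => rfl)
  right_inv g := funext fun q => Quotient.inductionOn q fun x => rfl

lemma card_fixedFun (π : Equiv.Perm (Fin n)) (α : Type*) [Finite α] :
    Nat.card {f : Fin n → α // ∀ x, f (π x) = f x} = Nat.card α ^ cycleCount π := by
  rw [Nat.card_congr (fixedFunEquiv π α), Nat.card_fun, cycleCount]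

lemma one_le_cycleCount (hn : 1 ≤ n) (π : Equiv.Perm (Fin n)) : 1 ≤ cycleCount π := by
  have : Nonempty (Fin n) := Fin.pos_iff_nonempty.mp hn
  have : Nonempty (MulAction.orbitRel.Quotient (Subgroup.zpowers π) (Fin n)) :=
    Nonempty.map (Quotient.mk _) this
  exact Nat.card_pos

lemma cycleCount_one : cycleCount (1 : Equiv.Perm (Fin n)) = n := by
  have hb : Function.Bijective
      (Quotient.mk (MulAction.orbitRel (Subgroup.zpowers (1 : Equiv.Perm (Fin n))) (Fin n))) := by
    constructor
    · intro a b hab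
      obtain ⟨k, hk⟩ := (orbitRel_iff 1 a b).mp (Quotient.exact hab)
      simpa using hk.symm
    · exact Quotient.exists_rep
  rw [cycleCount, ← Nat.card_eq_of_bijective _ hb, Nat.card_eq_fintype_card, Fintype.card_fin]

lemma eq_one_of_cycleCount_eq {π : Equiv.Perm (Fin n)} (hc : cycleCount π = n) : π = 1 := by
  set Q := MulAction.orbitRel.Quotient (Subgroup.zpowers π) (Fin n)
  have : Fintype Q := Fintype.ofFinite Q
  have hsurj : Function.Surjective
      (Quotient.mk (MulAction.orbitRel (Subgroup.zpowers π) (Fin n))) := Quotient.exists_rep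
  have hcard : Fintype.card (Fin n) = Fintype.card Q := by
    rw [Fintype.card_fin, ← Nat.card_eq_fintype_card]
    exact hc.symm
  have hb : Function.Bijective
      (Quotient.mk (MulAction.orbitRel (Subgroup.zpowers π) (Fin n))) :=
    (Fintype.bijective_iff_surjective_and_card _).mpr ⟨hsurj, hcard⟩
  apply Equiv.ext
  intro x
  simp only [Equiv.Perm.one_apply]
  have : Quotient.mk (MulAction.orbitRel (Subgroup.zpowers π) (Fin n)) (π x) =
      Quotient.mk _ x := Quotient.sound ((orbitRel_iff π (π x) x).mpr ⟨1, by simp⟩)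
  exact hb.1 this

open Classical in
/-- The orbit quotient is equivalent to fixed points plus cycle factors. -/
noncomputable def quotEquiv (π : Equiv.Perm (Fin n)) :
    MulAction.orbitRel.Quotient (Subgroup.zpowers π) (Fin n) ≃
      ({x : Fin n // π x = x} ⊕ {c // c ∈ π.cycleFactorsFinset}) where
  toFun := Quotient.lift (fun x =>
      if hx : π x = x then Sum.inl ⟨x, hx⟩
      else Sum.inr ⟨π.cycleOf x, Equiv.Perm.cycleOf_mem_cycleFactorsFinset_iff.mpr
        (Equiv.Perm.mem_support.mpr hx)⟩) (by
    intro a b hab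
    have hsc : π.SameCycle b a := (orbitRel_iff π a b).mp hab
    by_cases ha : π a = a <;> by_cases hb : π b = b
    · obtain ⟨k, hk⟩ := hsc
      have : a = b := by
        rw [← hk, Equiv.Perm.zpow_apply_eq_self_of_apply_eq_self hb]
      simp [ha, hb, this]
    · exfalso
      obtain ⟨k, hk⟩ := hsc.symm
      rw [Equiv.Perm.zpow_apply_eq_self_of_apply_eq_self ha k] at hk
      exact hb (hk ▸ ha)
    · exfalso
      obtain ⟨k, hk⟩ := hsc
      rw [Equiv.Perm.zpow_apply_eq_self_of_apply_eq_self hb k] at hk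
      exact ha (hk ▸ hb)
    · simp only [dif_neg ha, dif_neg hb]
      have hco := Equiv.Perm.SameCycle.cycleOf_eq (f := π) hsc.symm
      exact congrArg Sum.inr (Subtype.ext hco))
  invFun s :=
    match s with
    | Sum.inl x => Quotient.mk _ x.1
    | Sum.inr c => Quotient.mk _ ((Equiv.Perm.IsCycle.nonempty_support
        (Equiv.Perm.mem_cycleFactorsFinset_iff.mp c.2).1).choose)
  left_inv := by
    refine fun q => Quotient.inductionOn q fun x => ?_
    by_cases hx : π x = x
    · simp [hx]
    · simp only [Quotient.lift_mk, dif_neg hx]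
      refine Quotient.sound ?_
      refine (orbitRel_iff π _ x).mpr ?_
      have hmem := (Equiv.Perm.IsCycle.nonempty_support
        (Equiv.Perm.mem_cycleFactorsFinset_iff.mp
          (Equiv.Perm.cycleOf_mem_cycleFactorsFinset_iff.mpr
            (Equiv.Perm.mem_support.mpr hx))).1).choose_spec
      exact (Equiv.Perm.mem_support_cycleOf_iff.mp hmem).1
  right_inv := by
    rintro (⟨x, hx⟩ | ⟨c, hc⟩)
    · simp [hx]
    · have hmem := (Equiv.Perm.IsCycle.nonempty_support
        (Equiv.Perm.mem_cycleFactorsFinset_iff.mp hc).1).choose_spec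
      set pt := (Equiv.Perm.IsCycle.nonempty_support
        (Equiv.Perm.mem_cycleFactorsFinset_iff.mp hc).1).choose with hpt
      have hceq : c = π.cycleOf pt := Equiv.Perm.cycle_is_cycleOf hmem hc
      have hptsupp : pt ∈ π.support := by
        rw [hceq] at hmem
        exact (Equiv.Perm.mem_support_cycleOf_iff.mp hmem).2
      have hmove : ¬ π pt = pt := Equiv.Perm.mem_support.mp hptsupp
      simp only [Quotient.lift_mk, dif_neg hmove]
      split_ifs with hh
      · exact absurd hh hmove
      exact congrArg Sum.inr (Subtype.ext (α := Equiv.Perm (Fin n)) (by exact hceq.symm))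

lemma cycleCount_eq (π : Equiv.Perm (Fin n)) :
    cycleCount π = (n - π.support.card) + π.cycleType.card := by
  classical
  rw [cycleCount, Nat.card_congr (quotEquiv π), Nat.card_sum]
  congr 1
  · rw [Nat.card_eq_fintype_card, Fintype.card_subtype]
    have := Finset.card_filter_add_card_filter_not
      (s := (Finset.univ : Finset (Fin n))) (p := fun x => π x = x)
    have hsupp : π.support.card = (Finset.univ.filter fun x => ¬ π x = x).card := by
      congr 1
    simp only [Finset.card_univ, Fintype.card_fin] at this
    have hle : π.support.card ≤ n := by simpa using Finset.card_le_univ π.support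
    omega
  · rw [Nat.card_eq_fintype_card, Fintype.card_coe, Equiv.Perm.cycleType_def,
      Multiset.card_map]
    rfl

lemma neg_one_pow_cycleCount (π : Equiv.Perm (Fin n)) :
    ((-1 : ℂ)) ^ cycleCount π = (-1) ^ n * ((Equiv.Perm.sign π : ℤ) : ℂ) := by
  classical
  have hsign : Equiv.Perm.sign π = (-1 : ℤˣ) ^ (π.cycleType.sum + π.cycleType.card) :=
    Equiv.Perm.sign_of_cycleType π
  have hsum : π.cycleType.sum = π.support.card := Equiv.Perm.sum_cycleType π
  rw [cycleCount_eq, hsign, hsum]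
  have hcast : (((((-1 : ℤˣ) ^ (π.support.card + π.cycleType.card)) : ℤˣ) : ℤ) : ℂ)
      = (-1 : ℂ) ^ (π.support.card + π.cycleType.card) := by
    push_cast
    norm_num
  rw [hcast]
  have hs : π.support.card ≤ n := by simpa using Finset.card_le_univ π.support
  set s := π.support.card
  set t := π.cycleType.card
  have key : ((-1 : ℂ)) ^ (n - s + t) * (-1) ^ (s + t) = (-1) ^ n := by
    rw [← pow_add]
    have : n - s + t + (s + t) = n + 2 * t := by omega

    rw [this, pow_add, pow_mul]
    norm_num
  have h2 : ((-1 : ℂ)) ^ (s + t) * (-1) ^ (s + t) = 1 := by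
    rw [← pow_add, ← two_mul, pow_mul]; norm_num
  calc ((-1 : ℂ)) ^ (n - s + t) = (-1) ^ (n - s + t) * ((-1) ^ (s + t) * (-1) ^ (s + t)) := by
        rw [h2, mul_one]
    _ = ((-1) ^ (n - s + t) * (-1) ^ (s + t)) * (-1) ^ (s + t) := by ring
    _ = (-1) ^ n * (-1) ^ (s + t) := by rw [key]

/-! ### Permutation representations -/

noncomputable def permFDRep {G : Type} [Group G] (X : Type) [Fintype X] [MulAction G X] :
    FDRep ℂ G :=
  FDRep.of (Representation.ofMulAction ℂ G X)

lemma char_permFDRep {G : Type} [Group G] (X : Type) [Fintype X] [DecidableEq X]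
    [MulAction G X] (g : G) :
    (permFDRep (G := G) X).character g = Nat.card {x : X // g • x = x} := by
  classical
  have h : (permFDRep (G := G) X).character g
      = LinearMap.trace ℂ _ (Representation.ofMulAction ℂ G X g) := rfl
  rw [h, LinearMap.trace_eq_matrix_trace ℂ (MonoidAlgebra.basis X ℂ)]
  rw [Matrix.trace]
  simp only [Matrix.diag, LinearMap.toMatrix_apply, MonoidAlgebra.basis_apply,
    Representation.ofMulAction_single]
  rw [Nat.card_eq_fintype_card, Fintype.card_subtype, Finset.card_filter]
  push_cast
  simp [MonoidAlgebra.basis, MonoidAlgebra.coeffLinearEquiv, MonoidAlgebra.coeff_single,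
    Finsupp.single_apply, eq_comm]

lemma sum_char_eq_card_mul {G : Type} [Group G] [Fintype G] (E V W : FDRep ℂ G) :
    ∃ m : ℕ, ∑ g : G, E.character g * (V.character g * W.character g)
      = (Fintype.card G : ℂ) * m := by
  have : Invertible (Fintype.card G : ℂ) :=
    invertibleOfNonzero (Nat.cast_ne_zero.mpr Fintype.card_ne_zero)
  have h := FDRep.average_char_eq_finrank_invariants (E ⊗ V ⊗ W)
  refine ⟨Module.finrank ℂ (Representation.invariants (E ⊗ V ⊗ W).ρ), ?_⟩
  have hchar : ∀ g : G, (E ⊗ V ⊗ W).character g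
      = E.character g * (V.character g * W.character g) := by
    intro g
    rw [FDRep.char_tensor, Pi.mul_apply, FDRep.char_tensor, Pi.mul_apply]
  rw [Finset.sum_congr rfl (fun g _ => hchar g)] at h
  have := congrArg (fun z => (Fintype.card G : ℂ) * z) h
  simpa [smul_eq_mul, ← mul_assoc] using this

/-- The sign representation of `Perm (Fin n)`. -/
noncomputable def sgnRep (n : ℕ) : Representation ℂ (Equiv.Perm (Fin n)) ℂ where
  toFun π := ((Equiv.Perm.sign π : ℤ) : ℂ) • LinearMap.id
  map_one' := by simp [Module.End.one_eq_id]
  map_mul' := by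
    intro a b
    refine LinearMap.ext fun x => ?_
    simp only [map_mul, Module.End.mul_apply, LinearMap.smul_apply, LinearMap.id_apply,
      smul_eq_mul]
    push_cast
    ring

lemma char_sgnRep (n : ℕ) (π : Equiv.Perm (Fin n)) :
    (FDRep.of (sgnRep n)).character π = ((Equiv.Perm.sign π : ℤ) : ℂ) := by
  have h : (FDRep.of (sgnRep n)).character π = LinearMap.trace ℂ ℂ (sgnRep n π) := rfl
  rw [h]
  simp only [sgnRep, MonoidHom.coe_mk, OneHom.coe_mk, map_smul, LinearMap.trace_id]
  simp [Module.finrank_self]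

lemma simple_char_one_ne_zero {G : Type} [Group G] (V : FDRep ℂ G) (hV : Simple V) :
    V.character 1 ≠ 0 := by
  rw [FDRep.char_one]
  simp only [Nat.cast_ne_zero]
  intro h0
  have hsub : Subsingleton V := (Module.finrank_zero_iff (R := ℂ) (M := V)).mp h0
  have hid : (𝟙 V : V ⟶ V) = 0 := by
    apply Action.hom_ext
    ext x
    exact Subsingleton.elim (α := V) _ _
  exact CategoryTheory.id_nonzero V hid

/-! ### The action on colourings -/

instance arrowPermAction (α : Type) : MulAction (Equiv.Perm (Fin n)) (Fin n → α) where
  smul π f := f ∘ ⇑π⁻¹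
  one_smul f := by
    show f ∘ ⇑(1 : Equiv.Perm (Fin n))⁻¹ = f
    funext x
    simp
  mul_smul π σ f := by
    show f ∘ ⇑(π * σ)⁻¹ = (f ∘ ⇑σ⁻¹) ∘ ⇑π⁻¹
    funext x
    simp [mul_inv_rev]

lemma smul_arrow_def {α : Type} (π : Equiv.Perm (Fin n)) (f : Fin n → α) :
    π • f = f ∘ ⇑π⁻¹ := rfl

lemma arrow_fixed_iff {α : Type} (π : Equiv.Perm (Fin n)) (f : Fin n → α) :
    π • f = f ↔ ∀ x, f (π x) = f x := by
  constructor
  · intro h x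
    have := congrFun h (π x)
    simpa [smul_arrow_def] using this.symm
  · intro h
    funext x
    show f (π⁻¹ x) = f x
    have := h (π⁻¹ x)
    simpa using this.symm

instance colNewAction (q : ℕ) :
    MulAction (Equiv.Perm (Fin n)) {f : Fin n → Fin (q+1) // ∃ i, f i = Fin.last q} where
  smul π F := ⟨π • F.1, by
    obtain ⟨i, hi⟩ := F.2
    refine ⟨π i, ?_⟩
    show F.1 (π⁻¹ (π i)) = Fin.last q
    simpa using hi⟩
  one_smul F := Subtype.ext (one_smul _ F.1)
  mul_smul π σ F := Subtype.ext (mul_smul π σ F.1)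

lemma colNew_smul_val (q : ℕ) (π : Equiv.Perm (Fin n))
    (F : {f : Fin n → Fin (q+1) // ∃ i, f i = Fin.last q}) :
    (π • F).1 = π • F.1 := rfl

lemma card_fixed_col (π : Equiv.Perm (Fin n)) (q : ℕ) :
    Nat.card {f : Fin n → Fin q // ∀ x, f (π x) = f x} = q ^ cycleCount π := by
  rw [card_fixedFun, Nat.card_eq_fintype_card, Fintype.card_fin]

/-- Counting fixed colourings that use the last colour. -/
lemma count_colNew (q : ℕ) (π : Equiv.Perm (Fin n)) :
    Nat.card {f : Fin n → Fin (q+1) // (∀ x, f (π x) = f x) ∧ ∃ i, f i = Fin.last q}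
      + q ^ cycleCount π = (q+1) ^ cycleCount π := by
  classical
  have e2 : {f : Fin n → Fin (q+1) // (∀ x, f (π x) = f x) ∧ ¬ ∃ i, f i = Fin.last q}
      ≃ {g : Fin n → Fin q // ∀ x, g (π x) = g x} :=
    { toFun := fun f => ⟨fun i => (f.1 i).castLT (by
        have h := not_exists.mp f.2.2 i
        have h2 : (f.1 i).val ≠ q := by
          intro hh
          exact h (Fin.ext (by simp [hh]))
        have h3 := (f.1 i).isLt
        omega), fun x => Fin.ext (by
          simpa using congrArg Fin.val (f.2.1 x))⟩
      invFun := fun g => ⟨fun i => (g.1 i).castSucc,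
        ⟨fun x => Fin.ext (by simpa using congrArg Fin.val (g.2 x)),
         by
          rintro ⟨i, hi⟩
          exact absurd hi (ne_of_lt (Fin.castSucc_lt_last _))⟩⟩
      left_inv := fun f => Subtype.ext (funext fun i => Fin.ext (by simp))
      right_inv := fun g => Subtype.ext (funext fun i => Fin.ext (by simp)) }
  have h1 : Nat.card {f : Fin n → Fin (q+1) // ∀ x, f (π x) = f x}
      = (q+1) ^ cycleCount π := card_fixed_col π (q+1)
  have hsum : Nat.card {F : {f : Fin n → Fin (q+1) // ∀ x, f (π x) = f x} // ∃ i, F.1 i = Fin.last q}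
      + Nat.card {F : {f : Fin n → Fin (q+1) // ∀ x, f (π x) = f x} // ¬ ∃ i, F.1 i = Fin.last q}
      = Nat.card {f : Fin n → Fin (q+1) // ∀ x, f (π x) = f x} := by
    rw [← Nat.card_sum]
    exact Nat.card_congr (Equiv.sumCompl _)
  have hA1 : Nat.card {F : {f : Fin n → Fin (q+1) // ∀ x, f (π x) = f x} // ∃ i, F.1 i = Fin.last q}
      = Nat.card {f : Fin n → Fin (q+1) // (∀ x, f (π x) = f x) ∧ ∃ i, f i = Fin.last q} :=
    Nat.card_congr (Equiv.subtypeSubtypeEquivSubtypeInter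
      (fun f : Fin n → Fin (q+1) => ∀ x, f (π x) = f x)
      (fun f => ∃ i, f i = Fin.last q))
  have hA2 : Nat.card {F : {f : Fin n → Fin (q+1) // ∀ x, f (π x) = f x} // ¬ ∃ i, F.1 i = Fin.last q}
      = q ^ cycleCount π := by
    rw [Nat.card_congr ((Equiv.subtypeSubtypeEquivSubtypeInter
      (fun f : Fin n → Fin (q+1) => ∀ x, f (π x) = f x)
      (fun f => ¬ ∃ i, f i = Fin.last q)).trans e2)]
    exact card_fixed_col π q
  rw [hA1, hA2, h1] at hsum
  exact hsum

lemma char_col (q : ℕ) (π : Equiv.Perm (Fin n)) :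
    (permFDRep (Fin n → Fin q)).character π = (q : ℂ) ^ cycleCount π := by
  classical
  rw [char_permFDRep]
  have : Nat.card {f : Fin n → Fin q // π • f = f}
      = Nat.card {f : Fin n → Fin q // ∀ x, f (π x) = f x} :=
    Nat.card_congr (Equiv.subtypeEquivRight fun f => arrow_fixed_iff π f)
  rw [this, card_fixed_col]
  push_cast
  rfl

lemma char_colNew (q : ℕ) (π : Equiv.Perm (Fin n)) :
    (permFDRep {f : Fin n → Fin (q+1) // ∃ i, f i = Fin.last q}).character π
      = ((q:ℂ) + 1) ^ cycleCount π - (q : ℂ) ^ cycleCount π := by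
  classical
  rw [char_permFDRep]
  have e3 : {F : {f : Fin n → Fin (q+1) // ∃ i, f i = Fin.last q} // π • F = F}
      ≃ {f : Fin n → Fin (q+1) // (∀ x, f (π x) = f x) ∧ ∃ i, f i = Fin.last q} :=
    { toFun := fun F => ⟨F.1.1,
        ⟨by
          have h := congrArg Subtype.val F.2
          rw [colNew_smul_val] at h
          exact (arrow_fixed_iff π F.1.1).mp h, F.1.2⟩⟩
      invFun := fun f => ⟨⟨f.1, f.2.2⟩, by
        apply Subtype.ext
        rw [colNew_smul_val]
        exact (arrow_fixed_iff π f.1).mpr f.2.1⟩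
      left_inv := fun F => Subtype.ext (Subtype.ext rfl)
      right_inv := fun f => Subtype.ext rfl }
  rw [Nat.card_congr e3]
  have hc := count_colNew q π
  have := congrArg (fun k : ℕ => (k : ℂ)) hc
  push_cast at this
  exact eq_sub_of_add_eq this

/-! ### The positivity and monotonicity structure -/

lemma sum_eq_card_mul (ε : Equiv.Perm (Fin n) → ℂ) (E : FDRep ℂ (Equiv.Perm (Fin n)))
    (hE : ∀ π, E.character π = ε π) (V W : FDRep ℂ (Equiv.Perm (Fin n))) :
    ∃ m : ℕ, ∑ π : Equiv.Perm (Fin n), ε π * (V.character π * W.character π)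
      = (Fintype.card (Equiv.Perm (Fin n)) : ℂ) * m := by
  obtain ⟨m, hm⟩ := sum_char_eq_card_mul E V W
  exact ⟨m, by rw [← hm]; exact Finset.sum_congr rfl fun π _ => by rw [hE]⟩

lemma exists_nat_nonzero (hn : 1 ≤ n) (a : Equiv.Perm (Fin n) → ℂ) (ha : a 1 ≠ 0) :
    ∃ q : ℕ, ∑ π : Equiv.Perm (Fin n), (q : ℂ) ^ cycleCount π * a π ≠ 0 := by
  by_contra hcon
  push_neg at hcon
  set p : Polynomial ℂ :=
    ∑ π : Equiv.Perm (Fin n), Polynomial.C (a π) * Polynomial.X ^ cycleCount π with hp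
  have heval : ∀ q : ℕ, p.eval (q : ℂ) = 0 := by
    intro q
    rw [hp, Polynomial.eval_finset_sum]
    rw [← hcon q]
    refine Finset.sum_congr rfl fun π _ => ?_
    rw [Polynomial.eval_mul, Polynomial.eval_C, Polynomial.eval_pow, Polynomial.eval_X]
    ring
  have hp0 : p = 0 := by
    refine Polynomial.eq_zero_of_infinite_isRoot p ?_
    apply Set.infinite_of_injective_forall_mem (f := fun q : ℕ => (q : ℂ))
      (hi := fun a b hab => Nat.cast_injective hab)
    exact fun q => heval q
  have hcoeff : p.coeff n = a 1 := by
    rw [hp, Polynomial.finset_sum_coeff]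
    have : ∀ π : Equiv.Perm (Fin n),
        (Polynomial.C (a π) * Polynomial.X ^ cycleCount π).coeff n
          = if π = 1 then a π else 0 := by
      intro π
      rw [Polynomial.coeff_C_mul, Polynomial.coeff_X_pow]
      by_cases hπ : π = 1
      · subst hπ
        rw [cycleCount_one]
        simp
      · have : cycleCount π ≠ n := fun hc => hπ (eq_one_of_cycleCount_eq hc)
        rw [if_neg (fun h => this h.symm), if_neg hπ, mul_zero]
    rw [Finset.sum_congr rfl fun π _ => this π]
    simp
  rw [hp0] at hcoeff
  simp at hcoeff
  exact ha hcoeff.symm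

lemma propagate_ne (f : ℕ → ℂ)
    (h1 : ∀ q, ∃ m : ℕ, f q = (Fintype.card (Equiv.Perm (Fin n)) : ℂ) * m)
    (h2 : ∀ q, ∃ m : ℕ, f (q+1) = f q + (Fintype.card (Equiv.Perm (Fin n)) : ℂ) * m)
    {a b : ℕ} (hab : a ≤ b) (ha : f a ≠ 0) : f b ≠ 0 := by
  have hcard : (Fintype.card (Equiv.Perm (Fin n)) : ℂ) ≠ 0 :=
    Nat.cast_ne_zero.mpr Fintype.card_ne_zero
  induction b, hab using Nat.le_induction with
  | base => exact ha
  | succ b hab ih =>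
      obtain ⟨m0, hm0⟩ := h1 b
      obtain ⟨m, hm⟩ := h2 b
      have hm0ne : (m0 : ℂ) ≠ 0 := by
        intro h
        exact ih (by rw [hm0, h, mul_zero])
      have hm0pos : m0 ≠ 0 := fun h => hm0ne (by rw [h]; simp)
      rw [hm, hm0, ← mul_add]
      apply mul_ne_zero hcard
      have : ((m0 : ℂ) + m) = ((m0 + m : ℕ) : ℂ) := by push_cast; ring
      rw [this]
      simp only [Nat.cast_ne_zero]
      omega

end CharPolyAux

open MonoidalCategory

/-- The character polynomial `P(q) = ∑_π q^{c(π)} χ_V(π) χ_W(π)` of two irreducible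
representations `V`, `W` of `S_n` (`n ≥ 1`), evaluated at integers, is nonzero outside a
gap-free interval of integral roots: there are `q₊ ≥ 1` and `q₋ ≤ −1` with `P(q) ≠ 0`
for `q ≥ q₊` or `q ≤ q₋`, and `P(q) = 0` for `q₋ < q < q₊`. -/
theorem character_polynomial_integral_roots (n : ℕ) (hn : 1 ≤ n)
    (V W : FDRep ℂ (Equiv.Perm (Fin n))) (hV : Simple V) (hW : Simple W) :
    ∃ qp qm : ℤ, 1 ≤ qp ∧ qm ≤ -1 ∧
      (∀ q : ℤ, qp ≤ q ∨ q ≤ qm →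
        ∑ π : Equiv.Perm (Fin n),
            (q : ℂ) ^ cycleCount π * V.character π * W.character π ≠ 0) ∧
      (∀ q : ℤ, qm < q → q < qp →
        ∑ π : Equiv.Perm (Fin n),
            (q : ℂ) ^ cycleCount π * V.character π * W.character π = 0) := by
  classical
  have hVW1 : V.character 1 * W.character 1 ≠ 0 :=
    mul_ne_zero (CharPolyAux.simple_char_one_ne_zero V hV)
      (CharPolyAux.simple_char_one_ne_zero W hW)
  set sgn : Equiv.Perm (Fin n) → ℂ := fun π => ((Equiv.Perm.sign π : ℤ) : ℂ) with hsgn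
  set fpos : ℕ → ℂ := fun q => ∑ π : Equiv.Perm (Fin n),
      (q : ℂ) ^ cycleCount π * (V.character π * W.character π) with hfposdef
  set fneg : ℕ → ℂ := fun q => ∑ π : Equiv.Perm (Fin n),
      (sgn π * (q : ℂ) ^ cycleCount π) * (V.character π * W.character π) with hfnegdef
  -- structure of fpos
  have hpos1 : ∀ q : ℕ, ∃ m : ℕ,
      fpos q = (Fintype.card (Equiv.Perm (Fin n)) : ℂ) * m := by
    intro q
    obtain ⟨m, hm⟩ := CharPolyAux.sum_eq_card_mul (fun π => (q : ℂ) ^ cycleCount π)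
      (CharPolyAux.permFDRep (Fin n → Fin q)) (CharPolyAux.char_col q) V W
    exact ⟨m, hm⟩
  have hpos2 : ∀ q : ℕ, ∃ m : ℕ,
      fpos (q+1) = fpos q + (Fintype.card (Equiv.Perm (Fin n)) : ℂ) * m := by
    intro q
    obtain ⟨m, hm⟩ := CharPolyAux.sum_eq_card_mul
      (fun π => ((q : ℂ) + 1) ^ cycleCount π - (q : ℂ) ^ cycleCount π)
      (CharPolyAux.permFDRep {f : Fin n → Fin (q+1) // ∃ i, f i = Fin.last q})
      (CharPolyAux.char_colNew q) V W
    refine ⟨m, ?_⟩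
    have hdiff : fpos (q+1) - fpos q
        = (Fintype.card (Equiv.Perm (Fin n)) : ℂ) * m := by
      rw [← hm, hfposdef]
      rw [← Finset.sum_sub_distrib]
      refine Finset.sum_congr rfl fun π _ => ?_
      push_cast
      ring
    linear_combination hdiff
  have hneg1 : ∀ q : ℕ, ∃ m : ℕ,
      fneg q = (Fintype.card (Equiv.Perm (Fin n)) : ℂ) * m := by
    intro q
    obtain ⟨m, hm⟩ := CharPolyAux.sum_eq_card_mul
      (fun π => sgn π * (q : ℂ) ^ cycleCount π)
      (FDRep.of (CharPolyAux.sgnRep n) ⊗ CharPolyAux.permFDRep (Fin n → Fin q))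
      (fun π => by
        rw [FDRep.char_tensor, Pi.mul_apply, CharPolyAux.char_sgnRep,
          CharPolyAux.char_col]) V W
    exact ⟨m, hm⟩
  have hneg2 : ∀ q : ℕ, ∃ m : ℕ,
      fneg (q+1) = fneg q + (Fintype.card (Equiv.Perm (Fin n)) : ℂ) * m := by
    intro q
    obtain ⟨m, hm⟩ := CharPolyAux.sum_eq_card_mul
      (fun π => sgn π * (((q : ℂ) + 1) ^ cycleCount π - (q : ℂ) ^ cycleCount π))
      (FDRep.of (CharPolyAux.sgnRep n) ⊗
        CharPolyAux.permFDRep {f : Fin n → Fin (q+1) // ∃ i, f i = Fin.last q})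
      (fun π => by
        rw [FDRep.char_tensor, Pi.mul_apply, CharPolyAux.char_sgnRep,
          CharPolyAux.char_colNew]) V W
    refine ⟨m, ?_⟩
    have hdiff : fneg (q+1) - fneg q
        = (Fintype.card (Equiv.Perm (Fin n)) : ℂ) * m := by
      rw [← hm, hfnegdef]
      rw [← Finset.sum_sub_distrib]
      refine Finset.sum_congr rfl fun π _ => ?_
      push_cast
      ring
    linear_combination hdiff
  -- existence of a nonzero value
  have hfex : ∃ q : ℕ, fpos q ≠ 0 := by
    obtain ⟨q, hq⟩ := CharPolyAux.exists_nat_nonzero hn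
      (fun π => V.character π * W.character π) hVW1
    exact ⟨q, hq⟩
  have hgex : ∃ q : ℕ, fneg q ≠ 0 := by
    obtain ⟨q, hq⟩ := CharPolyAux.exists_nat_nonzero hn
      (fun π => sgn π * (V.character π * W.character π))
      (by simp only [hsgn, Equiv.Perm.sign_one]; simpa using hVW1)
    refine ⟨q, fun h0 => hq ?_⟩
    rw [← h0, hfnegdef]
    exact Finset.sum_congr rfl fun π _ => by ring
  -- zero at 0
  have hf0 : fpos 0 = 0 := by
    rw [hfposdef]
    refine Finset.sum_eq_zero fun π _ => ?_
    rw [Nat.cast_zero, zero_pow (by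
      have := CharPolyAux.one_le_cycleCount hn π
      omega)]
    ring
  have hg0 : fneg 0 = 0 := by
    rw [hfnegdef]
    refine Finset.sum_eq_zero fun π _ => ?_
    rw [Nat.cast_zero, zero_pow (by
      have := CharPolyAux.one_le_cycleCount hn π
      omega)]
    ring
  set q1 : ℕ := Nat.find hfex with hq1def
  set q2 : ℕ := Nat.find hgex with hq2def
  have hq1 : fpos q1 ≠ 0 := Nat.find_spec hfex
  have hq2 : fneg q2 ≠ 0 := Nat.find_spec hgex
  have hq1min : ∀ k, k < q1 → fpos k = 0 := fun k hk => by
    have := Nat.find_min hfex hk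
    simpa using this
  have hq2min : ∀ k, k < q2 → fneg k = 0 := fun k hk => by
    have := Nat.find_min hgex hk
    simpa using this
  have hq1pos : 1 ≤ q1 := by
    rcases Nat.eq_zero_or_pos q1 with h | h
    · exact absurd (h ▸ hq1) (by simp [hf0])
    · exact h
  have hq2pos : 1 ≤ q2 := by
    rcases Nat.eq_zero_or_pos q2 with h | h
    · exact absurd (h ▸ hq2) (by simp [hg0])
    · exact h
  -- translation between the integer sum and fpos/fneg
  have hsum_pos : ∀ q : ℤ, 0 ≤ q →
      ∑ π : Equiv.Perm (Fin n), (q : ℂ) ^ cycleCount π * V.character π * W.character π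
        = fpos q.toNat := by
    intro q hq0
    rw [hfposdef]
    refine Finset.sum_congr rfl fun π _ => ?_
    have hc : ((q.toNat : ℕ) : ℂ) = ((q : ℤ) : ℂ) := by
      exact_mod_cast congrArg (Int.cast : ℤ → ℂ) (Int.toNat_of_nonneg hq0)
    rw [hc]
    ring
  have hsum_neg : ∀ q : ℤ, q ≤ 0 →
      ∑ π : Equiv.Perm (Fin n), (q : ℂ) ^ cycleCount π * V.character π * W.character π
        = (-1 : ℂ) ^ n * fneg (-q).toNat := by
    intro q hq0
    rw [hfnegdef, Finset.mul_sum]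
    refine Finset.sum_congr rfl fun π _ => ?_
    have hc : (((-q).toNat : ℕ) : ℂ) = ((-q : ℤ) : ℂ) := by
      exact_mod_cast congrArg (Int.cast : ℤ → ℂ) (Int.toNat_of_nonneg (by omega))
    have hq : ((q : ℤ) : ℂ) = -(((-q).toNat : ℕ) : ℂ) := by
      rw [hc]
      push_cast
      ring
    rw [hq, neg_pow, CharPolyAux.neg_one_pow_cycleCount π]
    rw [hsgn]
    ring
  refine ⟨(q1 : ℤ), -(q2 : ℤ), by exact_mod_cast hq1pos, by omega, ?_, ?_⟩
  · rintro q (hq | hq)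
    · have hq0 : (0 : ℤ) ≤ q := by omega
      rw [hsum_pos q hq0]
      refine CharPolyAux.propagate_ne fpos hpos1 hpos2 ?_ hq1
      omega
    · have hq0 : q ≤ 0 := by omega
      rw [hsum_neg q hq0]
      refine mul_ne_zero (pow_ne_zero _ (by norm_num)) ?_
      refine CharPolyAux.propagate_ne fneg hneg1 hneg2 ?_ hq2
      omega
  · intro q hql hqr
    rcases le_or_gt 0 q with hq0 | hq0
    · rw [hsum_pos q hq0]
      refine hq1min q.toNat ?_
      omega
    · rw [hsum_neg q (le_of_lt hq0)]
      rw [hq2min (-q).toNat (by omega)]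
      ring
end

section
/- Let n be a natural number and let V, V′, W be finite-dimensional complex representations of G = Equiv.Perm (Fin n) with characters χ_V, χ_{V′}, χ_W, such that χ_{V′}(π) = sign(π) · χ_V(π) for every π ∈ G. Then for every integer z, ∑_{π ∈ G} z^{c(π)} · χ_{V′}(π) · χ_W(π) = (−1)^n · ∑_{π ∈ G} (−z)^{c(π)} · χ_V(π) · χ_W(π), where c(π) is the number of orbits of π acting on Fin n. -/
/-!
The orbits of `π` are its fixed points and the supports of its cycle factors. A cycle of
length `k` has sign `(-1)^(k-1)`, so `sign π = (-1)^(n - c(π)) = (-1)^(n + c(π))`.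
Hence `z^c(π) · sign π = (-1)^n · (-z)^c(π)` termwise, and the identity holds summand by summand.
-/

open CategoryTheory

namespace Equiv.Perm

variable {α : Type*}

theorem orbitRel_zpowers_eq_sameCycle_setoid (π : Perm α) :
    MulAction.orbitRel (Subgroup.zpowers π) α = SameCycle.setoid π := by
  ext x y
  change _ ↔ π.SameCycle x y
  rw [MulAction.orbitRel_apply, MulAction.mem_orbit_iff, sameCycle_comm]
  constructor
  · rintro ⟨⟨_, k, rfl⟩, h⟩
    exact ⟨k, h⟩
  · rintro ⟨k, h⟩
    exact ⟨⟨π ^ k, k, rfl⟩, h⟩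

variable [Fintype α] [DecidableEq α] (π : Perm α)

noncomputable def sameCycleQuotientEquiv :
    Quotient (SameCycle.setoid π) ≃ Function.fixedPoints π ⊕ π.cycleFactorsFinset := by
  let key (x : α) : Function.fixedPoints π ⊕ π.cycleFactorsFinset :=
    if h : π x = x then .inl ⟨x, h⟩
    else .inr ⟨π.cycleOf x, cycleOf_mem_cycleFactorsFinset_iff.2 (mem_support.2 h)⟩
  have key_congr (x y : α) (hxy : π.SameCycle x y) : key x = key y := by
    by_cases hx : π x = x
    · rw [hxy.eq_of_left hx]
    · have hy : ¬π y = y := by rwa [← hxy.apply_eq_self_iff]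
      simp only [key, dif_neg hx, dif_neg hy, hxy.cycleOf_eq]
  refine .ofBijective (Quotient.lift key key_congr) ⟨?_, ?_⟩
  · rintro ⟨x⟩ ⟨y⟩ hxy
    refine Quotient.sound ?_
    change key x = key y at hxy
    by_cases hx : π x = x <;> by_cases hy : π y = y <;>
      simp only [key, hx, hy, ↓reduceDIte, reduceCtorEq, Sum.inl.injEq, Sum.inr.injEq,
        Subtype.ext_iff] at hxy
    · exact hxy ▸ SameCycle.refl _ _
    · exact (sameCycle_iff_cycleOf_eq_of_mem_support (mem_support.2 hx) (mem_support.2 hy)).2 hxy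
  · rintro (⟨x, hx⟩ | ⟨c, hc⟩)
    · exact ⟨⟦x⟧, dif_pos hx⟩
    · obtain ⟨x, hx⟩ := (mem_cycleFactorsFinset_iff.1 hc).1.nonempty_support
      have hxπ : π x ≠ x := mem_support.1 (mem_cycleFactorsFinset_support_le hc hx)
      exact ⟨⟦x⟧, by simp [key, hxπ, cycle_is_cycleOf hx hc]⟩

theorem card_orbitRel_zpowers_quotient :
    Nat.card (MulAction.orbitRel.Quotient (Subgroup.zpowers π) α) =
      Nat.card (Function.fixedPoints π) + π.cycleFactorsFinset.card := by
  rw [MulAction.orbitRel.Quotient, orbitRel_zpowers_eq_sameCycle_setoid,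
    Nat.card_congr (sameCycleQuotientEquiv π), Nat.card_sum,
    Nat.card_eq_fintype_card (α := π.cycleFactorsFinset), Fintype.card_coe]

theorem sign_eq_neg_one_pow_card_add_card_orbits :
    sign π = (-1) ^ (Fintype.card α +
      Nat.card (MulAction.orbitRel.Quotient (Subgroup.zpowers π) α)) := by
  have hfix : Nat.card (Function.fixedPoints π) + π.support.card = Fintype.card α := by
    rw [Nat.card_eq_fintype_card, card_fixedPoints, sum_cycleType]
    exact Nat.sub_add_cancel (Finset.card_le_univ _)
  have hcycles : Multiset.card π.cycleType = π.cycleFactorsFinset.card := by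
    rw [cycleType_def, Multiset.card_map]
    rfl
  have hexp : Fintype.card α + (Nat.card (Function.fixedPoints π) + π.cycleFactorsFinset.card) =
      π.support.card + π.cycleFactorsFinset.card + 2 * Nat.card (Function.fixedPoints π) := by
    omega
  rw [sign_of_cycleType, sum_cycleType, hcycles, card_orbitRel_zpowers_quotient, hexp,
    pow_add _ (_ + _), pow_mul]
  simp

end Equiv.Perm

/-- Twisting `V` by the sign character (conjugating the Young diagram) relates the
character polynomials by `χ^{λ′μ}(z) = (−1)^n χ^{λμ}(−z)`. -/
theorem character_polynomial_sign_twist (n : ℕ)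
    (V V' W : FDRep ℂ (Equiv.Perm (Fin n)))
    (hsign : ∀ π : Equiv.Perm (Fin n),
      V'.character π = (Equiv.Perm.sign π : ℂ) * V.character π)
    (z : ℤ) :
    ∑ π : Equiv.Perm (Fin n),
        (z : ℂ) ^ cycleCount π * V'.character π * W.character π =
      (-1) ^ n * ∑ π : Equiv.Perm (Fin n),
        (-(z : ℂ)) ^ cycleCount π * V.character π * W.character π := by
  rw [Finset.mul_sum]
  refine Finset.sum_congr rfl fun π _ => ?_
  have hsign_pow : (Equiv.Perm.sign π : ℂ) = (-1) ^ (n + cycleCount π) := by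
    rw [cycleCount, Equiv.Perm.sign_eq_neg_one_pow_card_add_card_orbits, Fintype.card_fin]
    norm_cast
  rw [hsign π, hsign_pow, neg_pow, pow_add]
  ring
end

section
/- For every natural number n and every integer q, ∑_{π ∈ Equiv.Perm (Fin n)} sign(π) · q^{c(π)} = q·(q−1)·(q−2)⋯(q−n+1) = ∏_{i=0}^{n−1} (q − i), where c(π) is the number of orbits of π acting on Fin n and sign(π) is the sign of π. -/
open Equiv Finset Polynomial MulAction Subgroup

namespace Function

variable {α β : Type*}

def permStabilizer (f : α → β) : Subgroup (Perm α) where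
  carrier := {σ | f ∘ σ = f}
  one_mem' := rfl
  mul_mem' {σ τ} hσ hτ := by
    change f ∘ σ ∘ τ = f
    rw [← comp_assoc, hσ, hτ]
  inv_mem' {σ} hσ := by
    change f ∘ σ.symm = f
    conv_lhs => rw [← hσ]
    simp [comp_assoc]

@[simp]
theorem mem_permStabilizer {f : α → β} {σ : Perm α} : σ ∈ f.permStabilizer ↔ f ∘ σ = f :=
  Iff.rfl

instance [Fintype α] [DecidableEq β] (f : α → β) : DecidablePred (· ∈ f.permStabilizer) :=
  fun σ => decidable_of_iff (∀ x, f (σ x) = f x) funext_iff.symm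

theorem swap_mem_permStabilizer [DecidableEq α] {f : α → β} {a b : α} (h : f a = f b) :
    Equiv.swap a b ∈ f.permStabilizer := by
  ext x
  rcases eq_or_ne x a with rfl | hxa
  · simp [h]
  rcases eq_or_ne x b with rfl | hxb
  · simp [h]
  · simp [swap_apply_of_ne_of_ne hxa hxb]

theorem orbitRel_zpowers_le_ker_iff {f : α → β} {π : Perm α} :
    orbitRel (zpowers π) α ≤ Setoid.ker f ↔ f ∘ π = f := by
  refine ⟨fun h => funext fun x => h ⟨⟨π, mem_zpowers π⟩, rfl⟩, fun h a b hab => ?_⟩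
  obtain ⟨⟨_, hσ⟩, rfl⟩ := hab
  exact congrFun (zpowers_le.2 (mem_permStabilizer.2 h) hσ) b

theorem sum_sign_permStabilizer [Fintype α] [DecidableEq α] [DecidableEq β] (f : α → β) :
    ∑ σ : f.permStabilizer, (Perm.sign (σ : Perm α) : ℤ) = if f.Injective then 1 else 0 := by
  split_ifs with hf
  · have h_trivial (σ : f.permStabilizer) : σ = 1 :=
      Subtype.ext <| Perm.ext fun x => hf (congrFun σ.2 x)
    rw [Fintype.sum_eq_single 1 fun σ hσ => (hσ (h_trivial σ)).elim]
    simp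
  · obtain ⟨a, b, hab, hne⟩ := not_injective_iff.1 hf
    refine sum_hom_units_eq_zero
      ((Units.coeHom ℤ).comp (Perm.sign.comp f.permStabilizer.subtype)) fun h => ?_
    have := DFunLike.congr_fun h ⟨Equiv.swap a b, swap_mem_permStabilizer hab⟩
    simp [Perm.sign_swap hne] at this

end Function

namespace Equiv.Perm

variable {α β : Type*}

theorem card_invariant_fun [Finite α] (π : Perm α) :
    Nat.card {f : α → β // f ∘ π = f} =
      Nat.card β ^ Nat.card (orbitRel.Quotient (zpowers π) α) := by
  rw [← Nat.card_fun]
  exact Nat.card_congr <|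
    (subtypeEquivRight fun _ => Function.orbitRel_zpowers_le_ker_iff.symm).trans
      (Setoid.liftEquiv _)

theorem sum_sign_mul_card_invariant_fun [Fintype α] [DecidableEq α] [Fintype β] [DecidableEq β] :
    ∑ π : Perm α, (sign π : ℤ) * Nat.card {f : α → β // f ∘ π = f} = Nat.card (α ↪ β) := by
  calc ∑ π : Perm α, (sign π : ℤ) * Nat.card {f : α → β // f ∘ π = f}
      = ∑ π : Perm α, ∑ f : α → β, if π ∈ f.permStabilizer then (sign π : ℤ) else 0 := by
        refine sum_congr rfl fun π _ => ?_
        rw [sum_ite, sum_const_zero, add_zero, sum_const, nsmul_eq_mul, mul_comm,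
          Nat.card_eq_fintype_card, Fintype.card_subtype]
        simp only [Function.mem_permStabilizer]
    _ = ∑ f : α → β, ∑ σ : f.permStabilizer, (sign (σ : Perm α) : ℤ) := by
        rw [sum_comm]
        refine sum_congr rfl fun f _ => ?_
        rw [← sum_filter]
        exact sum_subtype _ (p := (· ∈ f.permStabilizer)) (fun _ => mem_filter_univ _) _
    _ = #{f : α → β | f.Injective} := by
        simp [Function.sum_sign_permStabilizer]
    _ = Nat.card (α ↪ β) := by
        rw [← Fintype.card_subtype, Nat.card_eq_fintype_card,
          Fintype.card_congr (subtypeInjectiveEquivEmbedding α β)]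

end Equiv.Perm

theorem sum_sign_mul_natCast_pow_cycleCount (n q : ℕ) :
    ∑ π : Perm (Fin n), (Perm.sign π : ℤ) * (q : ℤ) ^ cycleCount π = q.descFactorial n := by
  have h := Perm.sum_sign_mul_card_invariant_fun (α := Fin n) (β := Fin q)
  simp only [Perm.card_invariant_fun, Nat.card_fin, Nat.cast_pow] at h
  rwa [Nat.card_eq_fintype_card, Fintype.card_embedding_eq, Fintype.card_fin, Fintype.card_fin] at h

theorem sum_sign_C_mul_X_pow_cycleCount (n : ℕ) :
    ∑ π : Perm (Fin n), C (Perm.sign π : ℤ) * X ^ cycleCount π = descPochhammer ℤ n := by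
  refine eq_of_infinite_eval_eq _ _ <| Set.infinite_of_injective_forall_mem
    (f := ((↑) : ℕ → ℤ)) Nat.cast_injective fun q => ?_
  simp [eval_finsetSum, descPochhammer_eval_eq_descFactorial, sum_sign_mul_natCast_pow_cycleCount]

/-- The character polynomial for `λ = (1^n)` (sign) and `μ = (n)` (trivial):
`∑_π sign(π) q^{c(π)}` equals the falling factorial `q(q−1)⋯(q−n+1)`. -/
theorem sum_sign_mul_pow_cycleCount (n : ℕ) (q : ℤ) :
    ∑ π : Equiv.Perm (Fin n), (Equiv.Perm.sign π : ℤ) * q ^ cycleCount π =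
      ∏ i ∈ Finset.range n, (q - i) := by
  simpa [eval_finsetSum, descPochhammer_eval_eq_prod_range] using
    congrArg (eval q) (sum_sign_C_mul_X_pow_cycleCount n)
end

section
/- Let n, p, q be natural numbers with 1 ≤ n, 1 ≤ p, and n ≤ q. Then, as real numbers, (∏_{i=0}^{n−1} (q − i)) · p^n / (∏_{i=0}^{n−1} (p·q + i)) ≥ ((q − n + 1)/q)^n. Equivalently, q(q−1)⋯(q−n+1)·p^n / [(pq+n−1)(pq+n−2)⋯(pq)] ≥ ((q−n+1)/q)^n. -/
open Finset

/-- `p q (q - i) - (q - k) (p q + j) = p q (k - i - j) + j (q (p - 1) + k)`. -/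
theorem sub_div_le_mul_sub_div_add {p q i j k : ℝ} (hp : 1 ≤ p) (hq : 0 < q) (hi : 0 ≤ i)
    (hj : 0 ≤ j) (hijk : i + j ≤ k) : (q - k) / q ≤ p * (q - i) / (p * q + j) := by
  have hpq : 0 ≤ p * q := by positivity
  rw [div_le_div_iff₀ hq (by positivity)]
  have hslack : 0 ≤ q * (p - 1) + k := by nlinarith
  nlinarith [mul_nonneg hpq (sub_nonneg.2 hijk), mul_nonneg hj hslack]

theorem Finset.prod_mul_pow_card_div_prod {ι α : Type*} [DivisionCommMonoid α] (s : Finset ι)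
    (a b : ι → α) (c : α) :
    (∏ i ∈ s, a i) * c ^ s.card / ∏ i ∈ s, b i = ∏ i ∈ s, c * a i / b i := by
  rw [prod_div_distrib, prod_mul_distrib, prod_const, mul_comm]

/-- Reversing the denominator pairs `q - i` with `p q + (n - 1 - i)`. -/
theorem falling_factorial_ratio_bound_general (n p q : ℕ) (hp : 1 ≤ p) (hq : n ≤ q) :
    (∏ i ∈ Finset.range n, ((q : ℝ) - i)) * (p : ℝ) ^ n /
        (∏ i ∈ Finset.range n, ((p : ℝ) * q + i)) ≥
      (((q : ℝ) - n + 1) / q) ^ n := by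
  have hpR : (1 : ℝ) ≤ p := by exact_mod_cast hp
  have hqR : (n : ℝ) ≤ q := by exact_mod_cast hq
  have hfactor : ∀ i ∈ range n,
      ((q : ℝ) - n + 1) / q ≤ p * (q - i) / (p * q + ↑(n - 1 - i)) := by
    intro i hi
    have hin := mem_range.1 hi
    have hq0 : (0 : ℝ) < q := by exact_mod_cast (by omega : 0 < q)
    have hk : (i : ℝ) + ↑(n - 1 - i) ≤ n - 1 := by
      rw [le_sub_iff_add_le]; exact_mod_cast (by omega : i + (n - 1 - i) + 1 ≤ n)
    convert sub_div_le_mul_sub_div_add hpR hq0 i.cast_nonneg (Nat.cast_nonneg _) hk using 2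
    ring
  have hprod := prod_mul_pow_card_div_prod (range n) (fun i => (q : ℝ) - i)
    (fun i => (p : ℝ) * q + ↑(n - 1 - i)) p
  rw [card_range] at hprod
  rw [← prod_range_reflect (fun i => (p : ℝ) * q + i) n, ge_iff_le, hprod]
  calc
    (((q : ℝ) - n + 1) / q) ^ n = ∏ _i ∈ range n, ((q : ℝ) - n + 1) / q := by
      rw [prod_const, card_range]
    _ ≤ _ := prod_le_prod (fun _ _ => div_nonneg (by linarith) (by linarith)) hfactor

/-- The key arithmetic bound in the proof of the dual de Finetti theorem:
`q(q−1)⋯(q−n+1)·p^n / [(pq)(pq+1)⋯(pq+n−1)] ≥ ((q−n+1)/q)^n`. -/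
theorem falling_factorial_ratio_bound (n p q : ℕ) (hn : 1 ≤ n) (hp : 1 ≤ p) (hq : n ≤ q) :
    (∏ i ∈ Finset.range n, ((q : ℝ) - i)) * (p : ℝ) ^ n /
        (∏ i ∈ Finset.range n, ((p : ℝ) * q + i)) ≥
      (((q : ℝ) - n + 1) / q) ^ n :=
  falling_factorial_ratio_bound_general n p q hp hq
end

section
/- Let n, d be natural numbers with 1 ≤ n and 1 ≤ d, and let ρ be a positive semidefinite complex matrix of trace 1 indexed by Fin n → Fin d which is unitarily invariant, i.e. for every unitary matrix U indexed by Fin d, U^{⊗n} * ρ * (U^{⊗n})ᴴ = ρ, where U^{⊗n} is the matrix with entries (U^{⊗n}) a b = ∏_{m : Fin n} U (a m) (b m). Then there exist a finite index set, nonnegative real numbers r_i, and nonzero subspaces W_i of the Euclidean space ℂ^{(Fin n → Fin d)} such that: each W_i is invariant under the linear map induced by U^{⊗n} for every unitary U indexed by Fin d; each W_i is minimal with this property (it contains no nonzero proper subspace invariant under all such U^{⊗n}); and ρ equals ∑_i r_i · P_i, where P_i is the matrix of the orthogonal projection onto W_i. -/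
open Matrix ComplexOrder

/-- The `n`-th tensor power of a matrix `U` indexed by `ι`: the matrix indexed by
`Fin n → ι` with entries `(U^{⊗n}) a b = ∏ m, U (a m) (b m)`. -/
noncomputable def tensorPow {ι : Type*} [Fintype ι] (n : ℕ) (U : Matrix ι ι ℂ) :
    Matrix (Fin n → ι) (Fin n → ι) ℂ :=
  Matrix.of fun a b => ∏ m : Fin n, U (a m) (b m)

/-- The matrix (in the standard basis) of the orthogonal projection onto a subspace `W`
of the Euclidean space `ℂ^ι`. -/
noncomputable def projMatrix {ι : Type*} [Fintype ι] [DecidableEq ι]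
    (W : Submodule ℂ (EuclideanSpace ℂ ι)) : Matrix ι ι ℂ :=
  Matrix.toEuclideanLin.symm ((W.subtypeL.comp W.orthogonalProjection).toLinearMap)

/-!
A unitarily invariant state `ρ` commutes with every `U^{⊗n}`. The set of all `U^{⊗n}`, together
with `ρ` itself, is closed under adjoints, so the orthogonal complement of a subspace invariant
under it is again invariant, and the whole space is an orthogonal sum of minimal subspaces
invariant under the `U^{⊗n}` and `ρ`. On such a summand `W` the positive operator `ρ` has an
eigenvalue `r ≥ 0`, and the `r`-eigenspace meets `W` in a nonzero invariant subspace, hence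
contains `W`: `ρ` acts on `W` as `r`. Then every subspace of `W` invariant under the `U^{⊗n}` is
also invariant under `ρ`, so `W` is already minimal for the `U^{⊗n}` alone, and
`ρ = ∑ r_W P_W`.
-/

namespace Submodule

variable {𝕜 E : Type*} [RCLike 𝕜] [NormedAddCommGroup E] [InnerProductSpace 𝕜 E]

def IsInvariant (W : Submodule 𝕜 E) (S : Set (E →ₗ[𝕜] E)) : Prop :=
  ∀ g ∈ S, ∀ x ∈ W, g x ∈ W

abbrev IsMinimalInvariant (W : Submodule 𝕜 E) (S : Set (E →ₗ[𝕜] E)) : Prop :=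
  Minimal (fun W' : Submodule 𝕜 E => W' ≠ ⊥ ∧ W'.IsInvariant S) W

variable {S : Set (E →ₗ[𝕜] E)} {V W : Submodule 𝕜 E}

theorem isInvariant_top : (⊤ : Submodule 𝕜 E).IsInvariant S :=
  fun _ _ _ _ => mem_top

theorem IsInvariant.inf (hV : V.IsInvariant S) (hW : W.IsInvariant S) :
    (V ⊓ W).IsInvariant S :=
  fun g hg x hx => ⟨hV g hg x hx.1, hW g hg x hx.2⟩

theorem isInvariant_eigenspace {T : E →ₗ[𝕜] E} (hcomm : ∀ g ∈ S, Commute g T) (μ : 𝕜) :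
    (Module.End.eigenspace T μ).IsInvariant S := by
  intro g hg x hx
  rw [Module.End.mem_eigenspace_iff] at hx ⊢
  rw [← Module.End.mul_apply, ← (hcomm g hg).eq, Module.End.mul_apply, hx, map_smul]

theorem IsInvariant.orthogonal [FiniteDimensional 𝕜 E] (hS : ∀ g ∈ S, g.adjoint ∈ S)
    (hW : W.IsInvariant S) : Wᗮ.IsInvariant S := by
  intro g hg x hx
  rw [mem_orthogonal]
  intro w hw
  rw [← LinearMap.adjoint_inner_left]
  exact inner_right_of_mem_orthogonal (hW _ (hS g hg) w hw) hx

theorem IsMinimalInvariant.eq_bot_or_eq_of_le {W' : Submodule 𝕜 E} (hW : W.IsMinimalInvariant S)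
    (hW' : W'.IsInvariant S) (hle : W' ≤ W) : W' = ⊥ ∨ W' = W :=
  or_iff_not_imp_left.mpr fun hne => le_antisymm hle (hW.2 ⟨hne, hW'⟩ hle)

theorem IsMinimalInvariant.of_insert {T : E →ₗ[𝕜] E} {c : 𝕜} (hTW : ∀ x ∈ W, T x = c • x)
    (hW : W.IsMinimalInvariant (insert T S)) : W.IsMinimalInvariant S := by
  refine ⟨⟨hW.1.1, fun g hg => hW.1.2 g (Set.mem_insert_of_mem T hg)⟩,
    fun W' hW' hle => hW.2 ⟨hW'.1, ?_⟩ hle⟩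
  rintro g (rfl | hg) x hx
  · exact hTW x (hle hx) ▸ W'.smul_mem c hx
  · exact hW'.2 g hg x hx

theorem IsMinimalInvariant.exists_eq_smul_of_isPositive [FiniteDimensional 𝕜 E]
    {T : E →ₗ[𝕜] E} (hT : T.IsPositive) (hcomm : ∀ g ∈ S, Commute g T)
    (hW : W.IsMinimalInvariant (insert T S)) :
    ∃ r : ℝ, 0 ≤ r ∧ ∀ x ∈ W, T x = (r : 𝕜) • x := by
  have hTW : ∀ x ∈ W, T x ∈ W := hW.1.2 T (Set.mem_insert _ _)
  have : Nontrivial W := nontrivial_iff_ne_bot.mpr hW.1.1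
  obtain ⟨r, hr⟩ : ∃ r : ℝ, Module.End.HasEigenvalue (T.restrict hTW) r :=
    ⟨_, (hT.isSymmetric.restrict_invariant hTW).hasEigenvalue_iSup_of_finiteDimensional⟩
  obtain ⟨v, hv⟩ := hr.exists_hasEigenvector
  have hTv : T v = (r : 𝕜) • (v : E) := congrArg Subtype.val hv.apply_eq_smul
  have hv0 : (v : E) ≠ 0 := fun h => hv.2 (Subtype.ext h)
  have hW_eig : W ≤ W ⊓ Module.End.eigenspace T r := by
    refine hW.2 ⟨fun h => hv0 ?_, hW.1.2.inf (isInvariant_eigenspace ?_ _)⟩ inf_le_left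
    · exact (mem_bot 𝕜).mp (h ▸ mem_inf.mpr ⟨v.2, Module.End.mem_eigenspace_iff.mpr hTv⟩)
    · rintro g (rfl | hg)
      exacts [Commute.refl g, hcomm g hg]
  refine ⟨r, ?_, fun x hx => Module.End.mem_eigenspace_iff.mp (hW_eig hx).2⟩
  have hpos := hT.re_inner_nonneg_left v
  rw [hTv, inner_smul_left, RCLike.conj_ofReal, inner_self_eq_norm_sq_to_K] at hpos
  norm_cast at hpos
  exact nonneg_of_mul_nonneg_left hpos (pow_pos (norm_pos_iff.mpr hv0) 2)

theorem IsInvariant.exists_pairwise_isOrtho_isMinimalInvariant_iSup_eq [FiniteDimensional 𝕜 E]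
    (hS : ∀ g ∈ S, g.adjoint ∈ S) (hV : V.IsInvariant S) :
    ∃ s : Finset (Submodule 𝕜 E), (s : Set (Submodule 𝕜 E)).Pairwise IsOrtho ∧
      (∀ W ∈ s, W.IsMinimalInvariant S) ∧ ⨆ W ∈ s, W = V := by
  induction V using WellFoundedLT.induction with
  | ind V ih =>
  by_cases hV0 : V = ⊥
  · exact ⟨∅, by simp, by simp, by simp [hV0]⟩
  obtain ⟨W, hWV, hW⟩ : ∃ W ≤ V, W.IsMinimalInvariant S :=
    exists_minimal_le_of_wellFoundedLT _ V ⟨hV0, hV⟩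
  have hlt : Wᗮ ⊓ V < V := by
    refine inf_le_right.lt_of_ne fun h => hW.1.1 ?_
    exact le_bot_iff.mp (W.orthogonal_disjoint le_rfl (hWV.trans (h.ge.trans inf_le_left)))
  obtain ⟨s, hs_ortho, hs_min, hs_sup⟩ := ih _ hlt ((hW.1.2.orthogonal hS).inf hV)
  have hW_ortho : ∀ W' ∈ s, W ⟂ W' := fun W' hW' => isOrtho_comm.mp <| isOrtho_iff_le.mpr <|
    (le_biSup id hW').trans (hs_sup.le.trans inf_le_left)
  refine ⟨insert W s, ?_, Finset.forall_mem_insert _ _ _ |>.mpr ⟨hW, hs_min⟩, ?_⟩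
  · rw [Finset.coe_insert, Set.pairwise_insert]
    exact ⟨hs_ortho, fun W' hW' _ => ⟨hW_ortho W' hW', (hW_ortho W' hW').symm⟩⟩
  · rw [Finset.iSup_insert, hs_sup]
    exact sup_orthogonal_inf_of_hasOrthogonalProjection hWV

theorem sum_starProjection_apply_of_mem_iSup [FiniteDimensional 𝕜 E]
    {s : Finset (Submodule 𝕜 E)} (hs : (s : Set (Submodule 𝕜 E)).Pairwise IsOrtho) {x : E}
    (hx : x ∈ ⨆ W ∈ s, W) : ∑ W ∈ s, W.starProjection x = x := by
  rw [← Finset.sum_coe_sort]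
  refine OrthogonalFamily.sum_projection_of_mem_iSup (V := fun W : s => (W : Submodule 𝕜 E))
    (orthogonalFamily_iff_pairwise.mpr fun W W' h => hs W.2 W'.2 (Subtype.coe_ne_coe.mpr h)) x ?_
  rwa [iSup_subtype'] at hx

end Submodule

open Submodule in
theorem LinearMap.IsPositive.exists_eq_sum_starProjection_isMinimalInvariant
    {𝕜 E : Type*} [RCLike 𝕜] [NormedAddCommGroup E] [InnerProductSpace 𝕜 E]
    [FiniteDimensional 𝕜 E] {S : Set (E →ₗ[𝕜] E)} {T : E →ₗ[𝕜] E} (hT : T.IsPositive)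
    (hS : ∀ g ∈ S, g.adjoint ∈ S) (hcomm : ∀ g ∈ S, Commute g T) :
    ∃ (s : Finset (Submodule 𝕜 E)) (r : Submodule 𝕜 E → ℝ),
      (∀ W ∈ s, 0 ≤ r W ∧ W.IsMinimalInvariant S) ∧
      T = ∑ W ∈ s, (r W : 𝕜) • (W.starProjection : E →ₗ[𝕜] E) := by
  have hST : ∀ g ∈ insert T S, g.adjoint ∈ insert T S := by
    rintro g (rfl | hg)
    · rw [hT.isSymmetric.adjoint_eq]
      exact Set.mem_insert g S
    · exact Set.mem_insert_of_mem T (hS g hg)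
  obtain ⟨s, hs_ortho, hs_min, hs_sup⟩ :=
    isInvariant_top.exists_pairwise_isOrtho_isMinimalInvariant_iSup_eq hST
  choose! r hr_nonneg hr_eig using fun W hW =>
    (hs_min W hW).exists_eq_smul_of_isPositive hT hcomm
  refine ⟨s, r, fun W hW => ⟨hr_nonneg W hW, (hs_min W hW).of_insert (hr_eig W hW)⟩, ?_⟩
  ext x
  have hx : x ∈ ⨆ W ∈ s, W := hs_sup ▸ mem_top
  conv_lhs => rw [← sum_starProjection_apply_of_mem_iSup hs_ortho hx]
  simp only [map_sum, LinearMap.sum_apply, LinearMap.smul_apply, ContinuousLinearMap.coe_coe]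
  exact Finset.sum_congr rfl fun W hW => hr_eig W hW _ (W.starProjection_apply_mem x)

theorem Unitary.commute_of_mul_mul_star_eq {R : Type*} [Monoid R] [StarMul R] {u a : R}
    (hu : u ∈ unitary R) (h : u * a * star u = a) : Commute u a :=
  calc u * a = u * a * (star u * u) := by rw [Unitary.star_mul_self_of_mem hu, mul_one]
    _ = a * u := by rw [← mul_assoc, h]

theorem Commute.toEuclideanLin {𝕜 ι : Type*} [RCLike 𝕜] [Fintype ι] [DecidableEq ι]
    {A B : Matrix ι ι 𝕜} (h : Commute A B) : Commute A.toEuclideanLin B.toEuclideanLin := by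
  simpa only [ContinuousLinearMap.toLinearMapRingHom_apply, coe_toEuclideanCLM_eq_toEuclideanLin]
    using (h.map (toEuclideanCLM (n := ι) (𝕜 := 𝕜))).map ContinuousLinearMap.toLinearMapRingHom

section tensorPow

variable {ι : Type*} [Fintype ι] (n : ℕ)

theorem tensorPow_conjTranspose (U : Matrix ι ι ℂ) : (tensorPow n U)ᴴ = tensorPow n Uᴴ := by
  ext a b
  simp [tensorPow, conjTranspose_apply, star_prod]

theorem tensorPow_mul (A B : Matrix ι ι ℂ) :
    tensorPow n (A * B) = tensorPow n A * tensorPow n B := by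
  ext a b
  simp only [tensorPow, mul_apply, of_apply]
  rw [Fintype.prod_sum fun m k => A (a m) k * B k (b m)]
  simp [Finset.prod_mul_distrib]

theorem tensorPow_one [DecidableEq ι] : tensorPow n (1 : Matrix ι ι ℂ) = 1 := by
  ext a b
  by_cases h : a = b
  · subst h
    simp [tensorPow]
  · obtain ⟨m, hm⟩ := Function.ne_iff.mp h
    simp only [tensorPow, of_apply, one_apply_ne h]
    exact Finset.prod_eq_zero (Finset.mem_univ m) (one_apply_ne hm)

theorem tensorPow_mem_unitaryGroup [DecidableEq ι] {U : Matrix ι ι ℂ}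
    (hU : U ∈ unitaryGroup ι ℂ) : tensorPow n U ∈ unitaryGroup (Fin n → ι) ℂ := by
  rw [mem_unitaryGroup_iff, star_eq_conjTranspose, tensorPow_conjTranspose, ← tensorPow_mul,
    ← star_eq_conjTranspose, mem_unitaryGroup_iff.mp hU, tensorPow_one]

end tensorPow

theorem werner_state_characterisation_general (n d : ℕ)
    (ρ : Matrix (Fin n → Fin d) (Fin n → Fin d) ℂ)
    (hpsd : ρ.PosSemidef)
    (hinv : ∀ U ∈ Matrix.unitaryGroup (Fin d) ℂ,
      tensorPow n U * ρ * (tensorPow n U)ᴴ = ρ) :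
    ∃ (ι : Type) (_ : Fintype ι) (r : ι → ℝ)
      (W : ι → Submodule ℂ (EuclideanSpace ℂ (Fin n → Fin d))),
      (∀ i, 0 ≤ r i) ∧
      (∀ i, W i ≠ ⊥) ∧
      (∀ i, ∀ U ∈ Matrix.unitaryGroup (Fin d) ℂ,
        ∀ x ∈ W i, Matrix.toEuclideanLin (tensorPow n U) x ∈ W i) ∧
      (∀ i, ∀ W' : Submodule ℂ (EuclideanSpace ℂ (Fin n → Fin d)), W' ≤ W i →
        (∀ U ∈ Matrix.unitaryGroup (Fin d) ℂ,
          ∀ x ∈ W', Matrix.toEuclideanLin (tensorPow n U) x ∈ W') →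
        W' = ⊥ ∨ W' = W i) ∧
      ρ = ∑ i, (r i : ℂ) • projMatrix (W i) := by
  set S := {g | ∃ U ∈ unitaryGroup (Fin d) ℂ, toEuclideanLin (tensorPow n U) = g}
  have hS : ∀ g ∈ S, g.adjoint ∈ S := by
    rintro _ ⟨U, hU, rfl⟩
    refine ⟨star U, Unitary.star_mem hU, ?_⟩
    rw [← toEuclideanLin_conjTranspose_eq_adjoint, tensorPow_conjTranspose, star_eq_conjTranspose]
  have hcomm : ∀ g ∈ S, Commute g ρ.toEuclideanLin := by
    rintro _ ⟨U, hU, rfl⟩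
    exact (Unitary.commute_of_mul_mul_star_eq (tensorPow_mem_unitaryGroup n hU)
      (hinv U hU)).toEuclideanLin
  obtain ⟨s, r, hsr, hρ⟩ :=
    (isPositive_toEuclideanLin_iff.mpr hpsd).exists_eq_sum_starProjection_isMinimalInvariant hS
      hcomm
  refine ⟨s, inferInstance, fun W => r W, fun W => W, fun W => (hsr W W.2).1,
    fun W => (hsr W W.2).2.1.1, fun W U hU => (hsr W W.2).2.1.2 _ ⟨U, hU, rfl⟩,
    fun W W' hle hW' => (hsr W W.2).2.eq_bot_or_eq_of_le ?_ hle, ?_⟩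
  · rintro _ ⟨U, hU, rfl⟩
    exact hW' U hU
  · apply toEuclideanLin.injective
    simp only [hρ, map_sum, map_smul, projMatrix, LinearEquiv.apply_symm_apply]
    exact (Finset.sum_coe_sort s _).symm

/-- **Werner state characterisation.** Every unitarily invariant state on `(ℂ^d)^{⊗n}`
is a nonnegative combination of orthogonal projectors onto minimal subspaces invariant
under all `U^{⊗n}`, i.e. onto unitary irreps. -/
theorem werner_state_characterisation (n d : ℕ) (hn : 1 ≤ n) (hd : 1 ≤ d)
    (ρ : Matrix (Fin n → Fin d) (Fin n → Fin d) ℂ)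
    (hpsd : ρ.PosSemidef) (htr : ρ.trace = 1)
    (hinv : ∀ U ∈ Matrix.unitaryGroup (Fin d) ℂ,
      tensorPow n U * ρ * (tensorPow n U)ᴴ = ρ) :
    ∃ (ι : Type) (_ : Fintype ι) (r : ι → ℝ)
      (W : ι → Submodule ℂ (EuclideanSpace ℂ (Fin n → Fin d))),
      (∀ i, 0 ≤ r i) ∧
      (∀ i, W i ≠ ⊥) ∧
      (∀ i, ∀ U ∈ Matrix.unitaryGroup (Fin d) ℂ,
        ∀ x ∈ W i, Matrix.toEuclideanLin (tensorPow n U) x ∈ W i) ∧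
      (∀ i, ∀ W' : Submodule ℂ (EuclideanSpace ℂ (Fin n → Fin d)), W' ≤ W i →
        (∀ U ∈ Matrix.unitaryGroup (Fin d) ℂ,
          ∀ x ∈ W', Matrix.toEuclideanLin (tensorPow n U) x ∈ W') →
        W' = ⊥ ∨ W' = W i) ∧
      ρ = ∑ i, (r i : ℂ) • projMatrix (W i) :=
  werner_state_characterisation_general n d ρ hpsd hinv
end

section
/- Let n, d be natural numbers with 1 ≤ n and 1 ≤ d, and let ρ be a positive semidefinite complex matrix of trace 1 indexed by Fin n → Fin d which is symmetric, i.e. for every permutation π of Fin n, Q_π * ρ * Q_π ᴴ = ρ, where Q_π is the permutation matrix acting on ℂ^{(Fin n → Fin d)} by permuting the tensor factors according to π (i.e. sending the basis vector indexed by a : Fin n → Fin d to the basis vector indexed by a ∘ π⁻¹). Then there exist a finite index set, nonnegative real numbers r_i, and nonzero subspaces W_i of the Euclidean space ℂ^{(Fin n → Fin d)} such that: each W_i is invariant under Q_π for every permutation π of Fin n; each W_i is minimal with this property (it contains no nonzero proper subspace invariant under all Q_π); and ρ equals ∑_i r_i · P_i, where P_i is the matrix of the orthogonal projection onto W_i.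 -/
/-!
Since `ρ` is conjugation invariant under the unitaries `Q_π`, it commutes with them, so each
eigenspace of `ρ` is invariant under all `Q_π`. As `Q_π* = Q_{π⁻¹}`, the orthogonal complement of
an invariant subspace is invariant again, so every invariant subspace splits orthogonally into
minimal invariant ones.
Splitting the eigenspaces in the spectral decomposition `ρ = ∑ λ P_λ`, whose eigenvalues are
nonnegative because `ρ` is positive semidefinite, gives the claim.
-/

open Matrix ComplexOrder

/-- The permutation matrix on `(ℂ^d)^{⊗n}` permuting the tensor factors according to
`π`: it sends the standard basis vector indexed by `a : Fin n → Fin d` to the basis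
vector indexed by `a ∘ π⁻¹`. -/
noncomputable def permTensorMatrix (n d : ℕ) (π : Equiv.Perm (Fin n)) :
    Matrix (Fin n → Fin d) (Fin n → Fin d) ℂ :=
  Matrix.of fun a b => if a = b ∘ ⇑π⁻¹ then 1 else 0

open Module Module.End Submodule

section Invariant

variable {G R M : Type*} [Semiring R] [AddCommMonoid M] [Module R M] (A : G → End R M)

def IsInvariantUnder (W : Submodule R M) : Prop :=
  ∀ g, ∀ x ∈ W, A g x ∈ W

structure IsMinimalInvariantUnder (W : Submodule R M) : Prop where
  ne_bot : W ≠ ⊥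
  isInvariantUnder : IsInvariantUnder A W
  eq_bot_or_eq_of_le : ∀ W' ≤ W, IsInvariantUnder A W' → W' = ⊥ ∨ W' = W

variable {A}

theorem IsInvariantUnder.inf {V W : Submodule R M} (hV : IsInvariantUnder A V)
    (hW : IsInvariantUnder A W) : IsInvariantUnder A (V ⊓ W) :=
  fun g x hx => ⟨hV g x hx.1, hW g x hx.2⟩

theorem exists_isMinimalInvariantUnder_le [IsArtinian R M] {V : Submodule R M}
    (hV : IsInvariantUnder A V) (hV₀ : V ≠ ⊥) : ∃ U ≤ V, IsMinimalInvariantUnder A U := by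
  obtain ⟨U, ⟨hUV, hU, hU₀⟩, hmin⟩ := WellFounded.has_min wellFounded_lt
    {U | U ≤ V ∧ IsInvariantUnder A U ∧ U ≠ ⊥} ⟨V, le_rfl, hV, hV₀⟩
  refine ⟨U, hUV, hU₀, hU, fun W hWU hW => or_iff_not_imp_left.mpr fun hW₀ => ?_⟩
  exact eq_of_le_of_not_lt hWU (hmin W ⟨hWU.trans hUV, hW, hW₀⟩)

end Invariant

theorem isInvariantUnder_eigenspace {G R M : Type*} [CommRing R] [AddCommGroup M] [Module R M]
    {A : G → End R M} {T : End R M} (hT : ∀ g, Commute T (A g)) (μ : R) :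
    IsInvariantUnder A (T.eigenspace μ) :=
  fun g _ hx => mapsTo_genEigenspace_of_comm (hT g) μ 1 hx

section InnerProductSpace

variable {𝕜 E : Type*} [RCLike 𝕜] [NormedAddCommGroup E] [InnerProductSpace 𝕜 E]

theorem Submodule.starProjection_orthogonal_inf_apply {U V : Submodule 𝕜 E}
    [U.HasOrthogonalProjection] [V.HasOrthogonalProjection] [(Uᗮ ⊓ V).HasOrthogonalProjection]
    (hUV : U ≤ V) (x : E) :
    (Uᗮ ⊓ V).starProjection x = V.starProjection x - U.starProjection x := by
  refine eq_starProjection_of_mem_orthogonal ⟨?_, ?_⟩ ?_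
  · have := U.sub_starProjection_mem_orthogonal (V.starProjection x)
    rwa [← ContinuousLinearMap.comp_apply, starProjection_comp_starProjection_of_le hUV] at this
  · exact V.sub_mem (V.starProjection_apply_mem x) (hUV (U.starProjection_apply_mem x))
  · rw [sub_sub_eq_add_sub, add_sub_right_comm]
    refine add_mem ?_ ?_
    · exact orthogonal_le inf_le_right (V.sub_starProjection_mem_orthogonal x)
    · exact orthogonal_le inf_le_left (U.le_orthogonal_orthogonal (U.starProjection_apply_mem x))

theorem LinearMap.IsPositive.exists_nonneg_ofReal_eq_of_hasEigenvalue {T : End 𝕜 E}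
    (hT : T.IsPositive) {μ : 𝕜} (hμ : HasEigenvalue T μ) :
    ∃ r : ℝ, 0 ≤ r ∧ (r : 𝕜) = μ := by
  have hre : (RCLike.re μ : 𝕜) = μ :=
    RCLike.conj_eq_iff_re.mp (hT.isSymmetric.conj_eigenvalue_eq_self hμ)
  have hμ' : HasEigenvalue T (RCLike.re μ : 𝕜) := by rwa [hre]
  exact ⟨RCLike.re μ, eigenvalue_nonneg_of_nonneg hμ' hT.re_inner_nonneg_right, hre⟩

variable [FiniteDimensional 𝕜 E]

theorem LinearMap.IsSymmetric.eq_sum_smul_starProjection_eigenspace {T : End 𝕜 E}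
    (hT : T.IsSymmetric) :
    T = ∑ μ : Eigenvalues T, (μ : 𝕜) • ((eigenspace T μ).starProjection : End 𝕜 E) := by
  ext x
  have hx : ∑ μ : Eigenvalues T, (eigenspace T μ).starProjection x = x :=
    hT.orthogonalFamily_eigenspaces'.sum_projection_of_mem_iSup x
      (orthogonal_eq_bot_iff.mp hT.orthogonalComplement_iSup_eigenspaces_eq_bot' ▸ mem_top)
  conv_lhs => rw [← hx]
  simp only [map_sum, LinearMap.sum_apply, LinearMap.smul_apply, ContinuousLinearMap.coe_coe]
  exact Finset.sum_congr rfl fun μ _ => mem_eigenspace_iff.mp (starProjection_apply_mem _ x)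

variable {G : Type*} {A : G → End 𝕜 E}

theorem IsInvariantUnder.orthogonal (hA : ∀ g, ∃ h, (A g).adjoint = A h) {W : Submodule 𝕜 E}
    (hW : IsInvariantUnder A W) : IsInvariantUnder A Wᗮ := by
  intro g x hx u hu
  obtain ⟨h, hh⟩ := hA g
  rw [← LinearMap.adjoint_inner_left, hh]
  exact hx _ (hW h u hu)

theorem IsInvariantUnder.exists_starProjection_eq_sum (hA : ∀ g, ∃ h, (A g).adjoint = A h)
    {V : Submodule 𝕜 E} (hV : IsInvariantUnder A V) :
    ∃ (k : ℕ) (W : Fin k → Submodule 𝕜 E), (∀ i, IsMinimalInvariantUnder A (W i)) ∧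
      V.starProjection = ∑ i, (W i).starProjection := by
  induction V using WellFoundedLT.induction with
  | _ V ih =>
  rcases eq_or_ne V ⊥ with rfl | hV₀
  · exact ⟨0, Fin.elim0, fun i => i.elim0, by simp⟩
  obtain ⟨U, hUV, hU⟩ := exists_isMinimalInvariantUnder_le hV hV₀
  have hlt : Uᗮ ⊓ V < V := by
    refine inf_le_right.lt_of_ne fun h => hU.ne_bot ?_
    exact (orthogonal_disjoint U).eq_bot_of_le (hUV.trans (h.ge.trans inf_le_left))
  obtain ⟨k, W, hW, hsum⟩ := ih _ hlt ((hU.isInvariantUnder.orthogonal hA).inf hV)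
  refine ⟨k + 1, Fin.cons U W, Fin.cases hU hW, ?_⟩
  rw [Fin.sum_univ_succ, Fin.cons_zero]
  simp only [Fin.cons_succ, ← hsum]
  ext x
  simp [starProjection_orthogonal_inf_apply hUV]

theorem LinearMap.IsPositive.exists_eq_sum_smul_starProjection_of_commute {T : End 𝕜 E}
    (hT : T.IsPositive) (hA : ∀ g, ∃ h, (A g).adjoint = A h) (hTA : ∀ g, Commute T (A g)) :
    ∃ (k : ℕ) (r : Fin k → ℝ) (W : Fin k → Submodule 𝕜 E), (∀ i, 0 ≤ r i) ∧
      (∀ i, IsMinimalInvariantUnder A (W i)) ∧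
      T = ∑ i, (r i : 𝕜) • ((W i).starProjection : End 𝕜 E) := by
  choose r hr hrμ using fun μ : Eigenvalues T =>
    hT.exists_nonneg_ofReal_eq_of_hasEigenvalue (μ := μ) μ.2
  choose k W hW hsum using fun μ : Eigenvalues T =>
    (isInvariantUnder_eigenspace hTA μ).exists_starProjection_eq_sum hA
  let e := Fintype.equivFin (Σ μ : Eigenvalues T, Fin (k μ))
  refine ⟨_, fun i => r (e.symm i).1, fun i => W (e.symm i).1 (e.symm i).2,
    fun i => hr _, fun i => hW _ _, ?_⟩
  calc T = ∑ μ : Eigenvalues T, (μ : 𝕜) • ((eigenspace T μ).starProjection : End 𝕜 E) :=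
        hT.isSymmetric.eq_sum_smul_starProjection_eigenspace
    _ = ∑ p : Σ μ : Eigenvalues T, Fin (k μ),
          (r p.1 : 𝕜) • ((W p.1 p.2).starProjection : End 𝕜 E) := by
        simp [← Finset.univ_sigma_univ, Finset.sum_sigma, hrμ, hsum, Finset.smul_sum]
    _ = _ := (e.symm.sum_comp _).symm

end InnerProductSpace

theorem commute_of_mul_mul_eq {M : Type*} [Monoid M] {u v a : M} (hvu : v * u = 1)
    (h : u * a * v = a) : Commute u a :=
  calc u * a = u * a * (v * u) := by rw [hvu, mul_one]
    _ = a * u := by rw [← mul_assoc, h]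

section PermTensorMatrix

variable {n d : ℕ}

theorem permTensorMatrix_eq_permMatrix (π : Equiv.Perm (Fin n)) :
    permTensorMatrix n d π = Equiv.Perm.permMatrix ℂ (π⁻¹.arrowCongr (.refl (Fin d))) := by
  ext a b
  simp [permTensorMatrix, Equiv.Perm.inv_def, Equiv.eq_comp_symm, eq_comm, Equiv.arrowCongr]

theorem permTensorMatrix_conjTranspose (π : Equiv.Perm (Fin n)) :
    (permTensorMatrix n d π)ᴴ = permTensorMatrix n d π⁻¹ := by
  ext a b
  simp [permTensorMatrix, Equiv.Perm.inv_def, Equiv.eq_comp_symm, eq_comm]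

theorem permTensorMatrix_conjTranspose_mul_self (π : Equiv.Perm (Fin n)) :
    (permTensorMatrix n d π)ᴴ * permTensorMatrix n d π = 1 := by
  rw [permTensorMatrix_eq_permMatrix, conjTranspose_permMatrix, ← permMatrix_mul, mul_inv_cancel,
    permMatrix_one]

theorem adjoint_toEuclideanLin_permTensorMatrix (π : Equiv.Perm (Fin n)) :
    (toEuclideanLin (permTensorMatrix n d π)).adjoint =
      toEuclideanLin (permTensorMatrix n d π⁻¹) := by
  rw [← toEuclideanLin_conjTranspose_eq_adjoint, permTensorMatrix_conjTranspose]

end PermTensorMatrix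

theorem toEuclideanLin_projMatrix {ι : Type*} [Fintype ι] [DecidableEq ι]
    (W : Submodule ℂ (EuclideanSpace ℂ ι)) :
    toEuclideanLin (projMatrix W) = W.starProjection.toLinearMap :=
  LinearEquiv.apply_symm_apply _ _

theorem symmetric_state_characterisation_general (n d : ℕ)
    (ρ : Matrix (Fin n → Fin d) (Fin n → Fin d) ℂ)
    (hpsd : ρ.PosSemidef)
    (hinv : ∀ π : Equiv.Perm (Fin n),
      permTensorMatrix n d π * ρ * (permTensorMatrix n d π)ᴴ = ρ) :
    ∃ (ι : Type) (_ : Fintype ι) (r : ι → ℝ)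
      (W : ι → Submodule ℂ (EuclideanSpace ℂ (Fin n → Fin d))),
      (∀ i, 0 ≤ r i) ∧
      (∀ i, W i ≠ ⊥) ∧
      (∀ i, ∀ π : Equiv.Perm (Fin n),
        ∀ x ∈ W i, Matrix.toEuclideanLin (permTensorMatrix n d π) x ∈ W i) ∧
      (∀ i, ∀ W' : Submodule ℂ (EuclideanSpace ℂ (Fin n → Fin d)), W' ≤ W i →
        (∀ π : Equiv.Perm (Fin n),
          ∀ x ∈ W', Matrix.toEuclideanLin (permTensorMatrix n d π) x ∈ W') →
        W' = ⊥ ∨ W' = W i) ∧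
      ρ = ∑ i, (r i : ℂ) • projMatrix (W i) := by
  have hcomm (π : Equiv.Perm (Fin n)) :
      Commute (toEuclideanLin ρ) (toEuclideanLin (permTensorMatrix n d π)) :=
    ((commute_of_mul_mul_eq (permTensorMatrix_conjTranspose_mul_self π)
      (hinv π)).symm).map (toLpLinAlgEquiv 2)
  obtain ⟨k, r, W, hr, hW, hρ⟩ :=
    (isPositive_toEuclideanLin_iff.mpr hpsd).exists_eq_sum_smul_starProjection_of_commute
      (A := fun π => toEuclideanLin (permTensorMatrix n d π))
      (fun π => ⟨π⁻¹, adjoint_toEuclideanLin_permTensorMatrix π⟩) hcomm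
  refine ⟨Fin k, inferInstance, r, W, hr, fun i => (hW i).ne_bot,
    fun i => (hW i).isInvariantUnder, fun i => (hW i).eq_bot_or_eq_of_le, ?_⟩
  apply toEuclideanLin.injective
  simp only [map_sum, map_smul, toEuclideanLin_projMatrix]
  exact hρ

/-- **Symmetric state characterisation.** Every permutation-invariant state on
`(ℂ^d)^{⊗n}` is a nonnegative combination of orthogonal projectors onto minimal
subspaces invariant under all tensor-factor permutations `Q_π`, i.e. onto irreps of the
symmetric group. -/
theorem symmetric_state_characterisation (n d : ℕ) (hn : 1 ≤ n) (hd : 1 ≤ d)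
    (ρ : Matrix (Fin n → Fin d) (Fin n → Fin d) ℂ)
    (hpsd : ρ.PosSemidef) (htr : ρ.trace = 1)
    (hinv : ∀ π : Equiv.Perm (Fin n),
      permTensorMatrix n d π * ρ * (permTensorMatrix n d π)ᴴ = ρ) :
    ∃ (ι : Type) (_ : Fintype ι) (r : ι → ℝ)
      (W : ι → Submodule ℂ (EuclideanSpace ℂ (Fin n → Fin d))),
      (∀ i, 0 ≤ r i) ∧
      (∀ i, W i ≠ ⊥) ∧
      (∀ i, ∀ π : Equiv.Perm (Fin n),
        ∀ x ∈ W i, Matrix.toEuclideanLin (permTensorMatrix n d π) x ∈ W i) ∧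
      (∀ i, ∀ W' : Submodule ℂ (EuclideanSpace ℂ (Fin n → Fin d)), W' ≤ W i →
        (∀ π : Equiv.Perm (Fin n),
          ∀ x ∈ W', Matrix.toEuclideanLin (permTensorMatrix n d π) x ∈ W') →
        W' = ⊥ ∨ W' = W i) ∧
      ρ = ∑ i, (r i : ℂ) • projMatrix (W i) :=
  symmetric_state_characterisation_general n d ρ hpsd hinv
end
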